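/- arXiv:2603.18828 — 4 statements merged into one kernel-verified Lean document; each statement's English description precedes it below -/
import Mathlib

section
/- For a finite-dimensional quantum state ρ with spectral decomposition ρ = Σ_j r_j |r_j⟩⟨r_j| (eigenvalues in nonincreasing order) and Hamiltonian H = Σ_j E_j |E_j⟩⟨E_j| (eigenvalues in nondecreasing order), the unitary U⋆ = Σ_j |E_j⟩⟨r_j| achieves the maximum of tr(ρH) − tr(H U ρ U†) over all unitaries U; i.e., the ergotropy equals Σ_{i,j} E_i r_j |⟨E_i|r_j⟩|² − Σ_i r_i E_i. -/
open Matrix BigOperators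
open scoped ComplexOrder

lemma scalar_id (a b : ℝ) (z : ℂ) : (a:ℂ) * z * (b:ℂ) * star z = ((a * b * ‖z‖^2 : ℝ) : ℂ) := by
  have h : z * (starRingEnd ℂ) z = ((‖z‖:ℂ))^2 := RCLike.mul_conj z
  calc (a:ℂ) * z * (b:ℂ) * star z = (a:ℂ) * (b:ℂ) * (z * (starRingEnd ℂ) z) := by rw [show star z = (starRingEnd ℂ) z from rfl]; ring
  _ = (a:ℂ) * (b:ℂ) * ((‖z‖:ℂ))^2 := by rw [h]
  _ = ((a * b * ‖z‖^2 : ℝ) : ℂ) := by push_cast; ring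

lemma trace_DVD {d : ℕ} (E r : Fin d → ℝ) (V : Matrix (Fin d) (Fin d) ℂ) :
    (Matrix.trace (Matrix.diagonal (fun j => (E j : ℂ)) * V *
        Matrix.diagonal (fun j => (r j : ℂ)) * Vᴴ)).re
      = ∑ i, ∑ j, E i * r j * ‖V i j‖ ^ 2 := by
  have hA : ∀ i j, (Matrix.diagonal (fun j => (E j : ℂ)) * V *
      Matrix.diagonal (fun j => (r j : ℂ))) i j = (E i : ℂ) * V i j * (r j : ℂ) := by
    intro i j
    rw [Matrix.mul_diagonal, Matrix.diagonal_mul]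
  simp only [Matrix.trace, Matrix.diag_apply, Matrix.mul_apply, hA,
    Matrix.conjTranspose_apply, Complex.re_sum]
  refine Finset.sum_congr rfl fun i _ => ?_
  refine Finset.sum_congr rfl fun j _ => ?_
  rw [scalar_id, Complex.ofReal_re]

lemma ds_lower {d : ℕ} (E r : Fin d → ℝ) (hr : Antitone r) (hE : Monotone E)
    (B : Matrix (Fin d) (Fin d) ℝ) (hB : B ∈ doublyStochastic ℝ (Fin d)) :
    ∑ i, E i * r i ≤ ∑ i, ∑ j, E i * r j * B i j := by
  have hAv : Antivary E r := by
    intro i j h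
    rcases le_total i j with hij | hij
    · exact absurd (hr hij) (not_le.mpr h)
    · exact hE hij
  obtain ⟨w, hw0, hw1, hwB⟩ := exists_eq_sum_perm_of_mem_doublyStochastic hB
  have hBij : ∀ i j, B i j = ∑ σ : Equiv.Perm (Fin d), w σ * (σ.permMatrix ℝ) i j := by
    intro i j
    rw [← hwB]
    simp [Matrix.sum_apply]
  have hperm : ∀ σ : Equiv.Perm (Fin d), ∀ i,
      ∑ j, w σ * (E i * r j * (σ.permMatrix ℝ) i j) = w σ * (E i * r (σ i)) := by
    intro σ i
    rw [Finset.sum_eq_single (σ i)]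
    · simp [PEquiv.toMatrix_apply, Equiv.toPEquiv_apply]
    · intro b _ hb
      simp [PEquiv.toMatrix_apply, Equiv.toPEquiv_apply, Ne.symm hb]
    · simp
  have key : ∑ i, ∑ j, E i * r j * B i j
      = ∑ σ : Equiv.Perm (Fin d), w σ * ∑ i, E i * r (σ i) := by
    calc ∑ i, ∑ j, E i * r j * B i j
        = ∑ i, ∑ σ : Equiv.Perm (Fin d), w σ * (E i * r (σ i)) := by
          refine Finset.sum_congr rfl fun i _ => ?_
          calc ∑ j, E i * r j * B i j
              = ∑ j, ∑ σ : Equiv.Perm (Fin d),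
                  w σ * (E i * r j * (σ.permMatrix ℝ) i j) := by
                refine Finset.sum_congr rfl fun j _ => ?_
                rw [hBij i j, Finset.mul_sum]
                exact Finset.sum_congr rfl fun σ _ => by ring
          _ = ∑ σ : Equiv.Perm (Fin d), ∑ j,
                  w σ * (E i * r j * (σ.permMatrix ℝ) i j) := Finset.sum_comm
          _ = ∑ σ : Equiv.Perm (Fin d), w σ * (E i * r (σ i)) :=
                Finset.sum_congr rfl fun σ _ => hperm σ i
    _ = ∑ σ : Equiv.Perm (Fin d), ∑ i, w σ * (E i * r (σ i)) := Finset.sum_comm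
    _ = ∑ σ : Equiv.Perm (Fin d), w σ * ∑ i, E i * r (σ i) := by
          simp [Finset.mul_sum]
  rw [key]
  calc ∑ i, E i * r i = ∑ σ : Equiv.Perm (Fin d), w σ * ∑ i, E i * r i := by
        rw [← Finset.sum_mul, hw1, one_mul]
  _ ≤ ∑ σ : Equiv.Perm (Fin d), w σ * ∑ i, E i * r (σ i) :=
      Finset.sum_le_sum fun σ _ =>
        mul_le_mul_of_nonneg_left (hAv.sum_mul_le_sum_mul_comp_perm (σ := σ)) (hw0 σ)

lemma unitary_ds {d : ℕ} (V : Matrix (Fin d) (Fin d) ℂ)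
    (hV : V ∈ Matrix.unitaryGroup (Fin d) ℂ) :
    Matrix.of (fun i j => ‖V i j‖ ^ 2) ∈ doublyStochastic ℝ (Fin d) := by
  have h1 : V * Vᴴ = 1 := by
    rw [← Matrix.star_eq_conjTranspose]
    exact Matrix.mem_unitaryGroup_iff.mp hV
  have h2 : Vᴴ * V = 1 := by
    rw [← Matrix.star_eq_conjTranspose]
    exact Matrix.mem_unitaryGroup_iff'.mp hV
  rw [mem_doublyStochastic_iff_sum]
  refine ⟨fun i j => by simp only [Matrix.of_apply]; positivity, fun i => ?_, fun j => ?_⟩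
  · have h : (V * Vᴴ) i i = 1 := by rw [h1]; simp
    rw [Matrix.mul_apply] at h
    have h' : ∑ j, V i j * Vᴴ j i = ((∑ j, ‖V i j‖ ^ 2 : ℝ) : ℂ) := by
      push_cast
      refine Finset.sum_congr rfl fun j _ => ?_
      rw [Matrix.conjTranspose_apply]
      exact RCLike.mul_conj (V i j)
    rw [h'] at h
    exact_mod_cast h
  · have h : (Vᴴ * V) j j = 1 := by rw [h2]; simp
    rw [Matrix.mul_apply] at h
    have h' : ∑ i, Vᴴ j i * V i j = ((∑ i, ‖V i j‖ ^ 2 : ℝ) : ℂ) := by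
      push_cast
      refine Finset.sum_congr rfl fun i _ => ?_
      rw [Matrix.conjTranspose_apply]
      exact RCLike.conj_mul (V i j)
    rw [h'] at h
    exact_mod_cast h

lemma trace_conj_unitary {d : ℕ} (Q : Matrix (Fin d) (Fin d) ℂ)
    (hQ : Q ∈ Matrix.unitaryGroup (Fin d) ℂ) (M : Matrix (Fin d) (Fin d) ℂ) :
    Matrix.trace (Q * M * Qᴴ) = Matrix.trace M := by
  rw [Matrix.trace_mul_cycle, ← Matrix.star_eq_conjTranspose,
    (Matrix.mem_unitaryGroup_iff'.mp hQ), one_mul]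

/-- the unitary `U⋆ = Q * Pᴴ` (mapping the eigenbasis of `ρ`, eigenvalues
nonincreasing, to the energy eigenbasis, energies nondecreasing) achieves the maximum of
`tr(ρH) − tr(H U ρ Uᴴ)` over all unitaries, and the ergotropy equals
`Σ_{i,j} E_i r_j |⟨E_i|r_j⟩|² − Σ_i r_i E_i`. -/
theorem stmt0 {d : ℕ} (hd : 0 < d)
    (r E : Fin d → ℝ) (P Q : Matrix (Fin d) (Fin d) ℂ)
    (hP : P ∈ Matrix.unitaryGroup (Fin d) ℂ)
    (hQ : Q ∈ Matrix.unitaryGroup (Fin d) ℂ)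
    (hr : Antitone r) (hE : Monotone E)
    (ρ H : Matrix (Fin d) (Fin d) ℂ)
    (hρ : ρ = P * Matrix.diagonal (fun j => (r j : ℂ)) * Pᴴ)
    (hH : H = Q * Matrix.diagonal (fun j => (E j : ℂ)) * Qᴴ)
    (hρpos : ρ.PosSemidef) (hρtr : ρ.trace = 1) :
    IsGreatest
      {w : ℝ | ∃ U ∈ Matrix.unitaryGroup (Fin d) ℂ,
        w = (Matrix.trace (ρ * H)).re - (Matrix.trace (H * U * ρ * Uᴴ)).re}
      ((Matrix.trace (ρ * H)).re -
        (Matrix.trace (H * (Q * Pᴴ) * ρ * (Q * Pᴴ)ᴴ)).re)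
    ∧ (Matrix.trace (ρ * H)).re -
        (Matrix.trace (H * (Q * Pᴴ) * ρ * (Q * Pᴴ)ᴴ)).re
      = (∑ i, ∑ j, E i * r j * ‖(Qᴴ * P) i j‖ ^ 2) - ∑ i, r i * E i := by
  have hQ1 : Q * Qᴴ = 1 := by
    rw [← Matrix.star_eq_conjTranspose]; exact Matrix.mem_unitaryGroup_iff.mp hQ
  have hQ2 : Qᴴ * Q = 1 := by
    rw [← Matrix.star_eq_conjTranspose]; exact Matrix.mem_unitaryGroup_iff'.mp hQ
  have hP1 : P * Pᴴ = 1 := by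
    rw [← Matrix.star_eq_conjTranspose]; exact Matrix.mem_unitaryGroup_iff.mp hP
  have hP2 : Pᴴ * P = 1 := by
    rw [← Matrix.star_eq_conjTranspose]; exact Matrix.mem_unitaryGroup_iff'.mp hP
  set DE := Matrix.diagonal (fun j => (E j : ℂ)) with hDE
  set Dr := Matrix.diagonal (fun j => (r j : ℂ)) with hDr
  -- key conjugation identity for any U
  have hkey : ∀ U : Matrix (Fin d) (Fin d) ℂ,
      H * U * ρ * Uᴴ = Q * (DE * (Qᴴ * U * P) * Dr * (Qᴴ * U * P)ᴴ) * Qᴴ := by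
    intro U
    simp only [hH, hρ, Matrix.conjTranspose_mul, Matrix.conjTranspose_conjTranspose,
      Matrix.mul_assoc, hQ1, Matrix.mul_one]
  -- trace formula for any U
  have htr : ∀ U : Matrix (Fin d) (Fin d) ℂ,
      (Matrix.trace (H * U * ρ * Uᴴ)).re
        = ∑ i, ∑ j, E i * r j * ‖(Qᴴ * U * P) i j‖ ^ 2 := by
    intro U
    rw [hkey U, trace_conj_unitary Q hQ, trace_DVD]
  -- membership in unitary group of Qᴴ * U * P
  have hmem : ∀ U ∈ Matrix.unitaryGroup (Fin d) ℂ,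
      Qᴴ * U * P ∈ Matrix.unitaryGroup (Fin d) ℂ := by
    intro U hU
    have hQs : Qᴴ ∈ Matrix.unitaryGroup (Fin d) ℂ := by
      rw [← Matrix.star_eq_conjTranspose]
      exact Unitary.star_mem hQ
    exact mul_mem (mul_mem hQs hU) hP
  -- lower bound on trace for any unitary U
  have hlow : ∀ U ∈ Matrix.unitaryGroup (Fin d) ℂ,
      ∑ i, E i * r i ≤ (Matrix.trace (H * U * ρ * Uᴴ)).re := by
    intro U hU
    rw [htr U]
    exact ds_lower E r hr hE _ (unitary_ds _ (hmem U hU))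
  -- value at U⋆
  have hstar : (Matrix.trace (H * (Q * Pᴴ) * ρ * (Q * Pᴴ)ᴴ)).re = ∑ i, E i * r i := by
    rw [htr (Q * Pᴴ)]
    have hid : Qᴴ * (Q * Pᴴ) * P = 1 := by
      rw [← Matrix.mul_assoc, hQ2, Matrix.one_mul, hP2]
    rw [hid]
    refine Finset.sum_congr rfl fun i _ => ?_
    rw [Finset.sum_eq_single i]
    · simp [Matrix.one_apply]
    · intro b _ hb
      simp [Matrix.one_apply, Ne.symm hb]
    · simp
  -- trace(ρ*H) formula
  have hρH : (Matrix.trace (ρ * H)).re = ∑ i, ∑ j, E i * r j * ‖(Qᴴ * P) i j‖ ^ 2 := by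
    have h1 : H * ρ = Q * (DE * (Qᴴ * P) * Dr * (Qᴴ * P)ᴴ) * Qᴴ := by
      simp only [hH, hρ, Matrix.conjTranspose_mul, Matrix.conjTranspose_conjTranspose,
        Matrix.mul_assoc, hQ1, Matrix.mul_one]
    rw [Matrix.trace_mul_comm, h1, trace_conj_unitary Q hQ, trace_DVD]
  have hQPmem : Q * Pᴴ ∈ Matrix.unitaryGroup (Fin d) ℂ := by
    have hPs : Pᴴ ∈ Matrix.unitaryGroup (Fin d) ℂ := by
      rw [← Matrix.star_eq_conjTranspose]
      exact Unitary.star_mem hP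
    exact mul_mem hQ hPs
  refine ⟨⟨⟨Q * Pᴴ, hQPmem, rfl⟩, ?_⟩, ?_⟩
  · rintro w ⟨U, hU, rfl⟩
    have := hlow U hU
    rw [hstar]
    linarith
  · rw [hstar, hρH]
    congr 1
    exact Finset.sum_congr rfl fun i _ => mul_comm _ _
end

section
/- Fix a Hamiltonian H = Σ_{i=1}^d ε_i |ε_i⟩⟨ε_i| with ε_1 ≤ … ≤ ε_d, and let Ω be the set of density matrices ω with prescribed energy-basis probabilities ⟨ε_i|ω|ε_i⟩ = p_i for all i. Then the minimum ergotropy over Ω is attained at the dephased state ρ* = Σ_i p_i |ε_i⟩⟨ε_i| and equals Σ_i p_i ε_i − Σ_i p_i^↓ ε_i, where p^↓ is the nonincreasing rearrangement of p. -/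
open Matrix BigOperators
open scoped ComplexOrder

lemma card_filter_fin_lt {d : ℕ} (m : ℕ) (hm : m ≤ d) :
    (Finset.univ.filter (fun i : Fin d => (i : ℕ) < m)).card = m := by
  induction m with
  | zero => simp
  | succ k ih =>
    have hk : k ≤ d := Nat.le_of_succ_le hm
    have hins : Finset.univ.filter (fun i : Fin d => (i:ℕ) < k+1)
        = insert (⟨k, hm⟩ : Fin d) (Finset.univ.filter (fun i : Fin d => (i:ℕ) < k)) := by
      ext i
      simp only [Finset.mem_filter, Finset.mem_univ, true_and, Finset.mem_insert, Fin.ext_iff]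
      omega
    rw [hins, Finset.card_insert_of_notMem (by simp), ih hk]

lemma sum_mul_le_head {d : ℕ} (μ b : Fin d → ℝ) (hμ : Antitone μ)
    (hb0 : ∀ i, 0 ≤ b i) (hb1 : ∀ i, b i ≤ 1) (m : ℕ) (hm : m ≤ d)
    (hsum : ∑ i, b i = m) :
    ∑ i, b i * μ i ≤ ∑ i ∈ Finset.univ.filter (fun i : Fin d => (i:ℕ) < m), μ i := by
  rcases Nat.eq_zero_or_pos m with rfl | hm0
  · have hz : ∀ i ∈ Finset.univ, b i = 0 :=
      (Finset.sum_eq_zero_iff_of_nonneg (fun i _ => hb0 i)).mp (by simpa using hsum)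
    have : ∑ i, b i * μ i = 0 :=
      Finset.sum_eq_zero fun i hi => by rw [hz i hi, zero_mul]
    simp [this]
  · set A := Finset.univ.filter (fun i : Fin d => (i:ℕ) < m) with hA
    set t : ℝ := μ ⟨m-1, by omega⟩ with ht
    have hcard : (A.card : ℝ) = m := by rw [hA, card_filter_fin_lt m hm]
    have hsplitb : ∑ i ∈ A, b i + ∑ i ∈ Aᶜ, b i = (m:ℝ) := by
      rw [Finset.sum_add_sum_compl]; exact hsum
    have h1 : ∑ i ∈ Aᶜ, b i * μ i ≤ (∑ i ∈ Aᶜ, b i) * t := by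
      rw [Finset.sum_mul]
      apply Finset.sum_le_sum; intro i hi
      have hi' : ¬ (i:ℕ) < m := by
        simpa [hA] using (Finset.mem_compl.mp hi)
      have hiμ : μ i ≤ t := hμ (by rw [Fin.le_def]; simp; omega)
      exact mul_le_mul_of_nonneg_left hiμ (hb0 i)
    have h2 : (∑ i ∈ A, (1 - b i)) * t ≤ ∑ i ∈ A, (1 - b i) * μ i := by
      rw [Finset.sum_mul]
      apply Finset.sum_le_sum; intro i hi
      have hi' : (i:ℕ) < m := by simpa [hA] using hi
      have hiμ : t ≤ μ i := hμ (by rw [Fin.le_def]; simp; omega)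
      exact mul_le_mul_of_nonneg_left hiμ (by linarith [hb1 i])
    have h3 : ∑ i ∈ A, (1 - b i) = (A.card : ℝ) - ∑ i ∈ A, b i := by
      rw [Finset.sum_sub_distrib]; simp
    have h4 : ∑ i ∈ A, (1 - b i) * μ i = ∑ i ∈ A, μ i - ∑ i ∈ A, b i * μ i := by
      rw [← Finset.sum_sub_distrib]; congr 1; ext i; ring
    have h5 : ∑ i, b i * μ i = ∑ i ∈ A, b i * μ i + ∑ i ∈ Aᶜ, b i * μ i :=
      (Finset.sum_add_sum_compl A _).symm
    have hbac : ∑ i ∈ Aᶜ, b i = (m:ℝ) - ∑ i ∈ A, b i := by linarith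
    rw [h5]
    have := h2
    rw [h3, h4, hcard] at this
    have h1' : ∑ i ∈ Aᶜ, b i * μ i ≤ ((m:ℝ) - ∑ i ∈ A, b i) * t := by
      rw [← hbac]; exact h1
    linarith [this, h1']

lemma sum_mul_le_head' {d : ℕ} (lam c : Fin d → ℝ) (τ : Equiv.Perm (Fin d))
    (hτ : Antitone (lam ∘ τ)) (hc0 : ∀ j, 0 ≤ c j) (hc1 : ∀ j, c j ≤ 1)
    (m : ℕ) (hm : m ≤ d) (hsum : ∑ j, c j = m) :
    ∑ j, c j * lam j ≤ ∑ i ∈ Finset.univ.filter (fun i : Fin d => (i:ℕ) < m), lam (τ i) := by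
  have h1 : ∑ j, c j * lam j = ∑ i, c (τ i) * lam (τ i) :=
    (Equiv.sum_comp τ (fun j => c j * lam j)).symm
  rw [h1]
  exact sum_mul_le_head (lam ∘ τ) (c ∘ τ) hτ (fun i => hc0 _) (fun i => hc1 _) m hm
    (by simpa [Function.comp] using (Equiv.sum_comp τ c).trans hsum)

lemma abel_compare {d : ℕ} (hd : 0 < d) (ε x y : Fin d → ℝ) (hε : Monotone ε)
    (hsum : ∑ i, x i = ∑ i, y i)
    (hhead : ∀ m : ℕ, 0 < m → m < d →
      ∑ i ∈ Finset.univ.filter (fun i : Fin d => (i:ℕ) < m), y i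
        ≤ ∑ i ∈ Finset.univ.filter (fun i : Fin d => (i:ℕ) < m), x i) :
    ∑ i, ε i * x i ≤ ∑ i, ε i * y i := by
  set g : ℕ → ℝ := fun k => ε ⟨min k (d-1), by omega⟩ with hg
  have key : ∀ z : Fin d → ℝ, ∑ i, ε i * z i
      = g (d-1) * (∑ i, z i)
        - ∑ k ∈ Finset.range (d-1), (g (k+1) - g k) *
            ∑ i ∈ Finset.univ.filter (fun i : Fin d => (i:ℕ) < k+1), z i := by
    intro z
    have tel : ∀ i : Fin d, ε i = g (d-1) - ∑ k ∈ Finset.Ico i.1 (d-1), (g (k+1) - g k) := by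
      intro i
      have h1 : ∑ k ∈ Finset.Ico i.1 (d-1), (g (k+1) - g k) = g (d-1) - g (i:ℕ) := by
        rw [Finset.sum_Ico_eq_sub _ (by omega : (i:ℕ) ≤ d-1)]
        rw [Finset.sum_range_sub g, Finset.sum_range_sub g]
        ring
      have h2 : g (i:ℕ) = ε i := by
        simp only [hg]; congr 1; apply Fin.ext; simp; omega
      rw [h1, h2]; ring
    calc ∑ i, ε i * z i
        = ∑ i, (g (d-1) * z i - (∑ k ∈ Finset.Ico i.1 (d-1), (g (k+1) - g k)) * z i) := by
          apply Finset.sum_congr rfl; intro i _; rw [tel i]; ring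
      _ = g (d-1) * (∑ i, z i) - ∑ i : Fin d, (∑ k ∈ Finset.Ico i.1 (d-1), (g (k+1) - g k)) * z i := by
          rw [Finset.sum_sub_distrib, Finset.mul_sum]
      _ = g (d-1) * (∑ i, z i)
          - ∑ k ∈ Finset.range (d-1), (g (k+1) - g k) *
              ∑ i ∈ Finset.univ.filter (fun i : Fin d => (i:ℕ) < k+1), z i := by
          congr 1
          have hIco : ∀ i : Fin d, ∑ k ∈ Finset.Ico i.1 (d-1), (g (k+1) - g k)
              = ∑ k ∈ Finset.range (d-1), if (i:ℕ) ≤ k then (g (k+1) - g k) else 0 := by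
            intro i
            rw [← Finset.sum_filter]
            congr 1
            ext k
            simp [Finset.mem_Ico, Finset.mem_filter, Finset.mem_range]
            omega
          calc ∑ i : Fin d, (∑ k ∈ Finset.Ico i.1 (d-1), (g (k+1) - g k)) * z i
              = ∑ i : Fin d, ∑ k ∈ Finset.range (d-1),
                  (if (i:ℕ) ≤ k then (g (k+1) - g k) else 0) * z i := by
                apply Finset.sum_congr rfl; intro i _; rw [hIco i, Finset.sum_mul]
            _ = ∑ k ∈ Finset.range (d-1), ∑ i : Fin d,
                  (if (i:ℕ) ≤ k then (g (k+1) - g k) else 0) * z i := Finset.sum_comm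
            _ = ∑ k ∈ Finset.range (d-1), (g (k+1) - g k) *
                  ∑ i ∈ Finset.univ.filter (fun i : Fin d => (i:ℕ) < k+1), z i := by
                apply Finset.sum_congr rfl; intro k _
                rw [Finset.mul_sum, Finset.sum_filter]
                apply Finset.sum_congr rfl; intro i _
                by_cases h : (i:ℕ) ≤ k
                · have h' : (i:ℕ) < k+1 := by omega
                  simp [h, h']
                · have h' : ¬ (i:ℕ) < k+1 := by omega
                  simp [h, h']
  rw [key x, key y, hsum]
  have : ∀ k ∈ Finset.range (d-1), (g (k+1) - g k) *
        ∑ i ∈ Finset.univ.filter (fun i : Fin d => (i:ℕ) < k+1), y i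
      ≤ (g (k+1) - g k) *
        ∑ i ∈ Finset.univ.filter (fun i : Fin d => (i:ℕ) < k+1), x i := by
    intro k hk
    have hk' : k < d - 1 := Finset.mem_range.mp hk
    have hgm : g k ≤ g (k+1) := by
      apply hε; rw [Fin.mk_le_mk]; omega
    exact mul_le_mul_of_nonneg_left (hhead (k+1) (Nat.succ_pos k) (by omega)) (by linarith)
  linarith [Finset.sum_le_sum this]

variable {d : ℕ}

lemma unit_mul_ct {W : Matrix (Fin d) (Fin d) ℂ} (hW : W ∈ Matrix.unitaryGroup (Fin d) ℂ) :
    W * Wᴴ = 1 := by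
  rw [← Matrix.star_eq_conjTranspose]; exact Matrix.mem_unitaryGroup_iff.mp hW

lemma ct_mul_unit {W : Matrix (Fin d) (Fin d) ℂ} (hW : W ∈ Matrix.unitaryGroup (Fin d) ℂ) :
    Wᴴ * W = 1 := by
  rw [← Matrix.star_eq_conjTranspose]; exact Matrix.mem_unitaryGroup_iff'.mp hW

lemma conj_diag_entry (W : Matrix (Fin d) (Fin d) ℂ) (lam : Fin d → ℝ) (i : Fin d) :
    (W * Matrix.diagonal (fun j => (lam j : ℂ)) * Wᴴ) i i
      = ((∑ j, Complex.normSq (W i j) * lam j : ℝ) : ℂ) := by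
  rw [Matrix.mul_apply]
  push_cast
  apply Finset.sum_congr rfl
  intro j _
  rw [Matrix.mul_diagonal, Matrix.conjTranspose_apply]
  have : W i j * (lam j : ℂ) * star (W i j) = (W i j * star (W i j)) * (lam j:ℂ) := by ring
  rw [this, show star (W i j) = (starRingEnd ℂ) (W i j) from rfl, Complex.mul_conj]

lemma unitary_row_sum {W : Matrix (Fin d) (Fin d) ℂ} (hW : W ∈ Matrix.unitaryGroup (Fin d) ℂ)
    (i : Fin d) : ∑ j, Complex.normSq (W i j) = 1 := by
  have h := congrFun (congrFun (unit_mul_ct hW) i) i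
  rw [Matrix.mul_apply, Matrix.one_apply_eq] at h
  have h2 : ∑ j, (Complex.normSq (W i j) : ℂ) = 1 := by
    rw [← h]
    apply Finset.sum_congr rfl
    intro j _
    rw [Matrix.conjTranspose_apply, show star (W i j) = (starRingEnd ℂ) (W i j) from rfl,
      Complex.mul_conj]
  have := congrArg Complex.re h2
  simpa using this

lemma unitary_col_sum {W : Matrix (Fin d) (Fin d) ℂ} (hW : W ∈ Matrix.unitaryGroup (Fin d) ℂ)
    (j : Fin d) : ∑ i, Complex.normSq (W i j) = 1 := by
  have h := congrFun (congrFun (ct_mul_unit hW) j) j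
  rw [Matrix.mul_apply, Matrix.one_apply_eq] at h
  have h2 : ∑ i, (Complex.normSq (W i j) : ℂ) = 1 := by
    rw [← h]
    apply Finset.sum_congr rfl
    intro i _
    rw [Matrix.conjTranspose_apply, mul_comm, show star (W i j) = (starRingEnd ℂ) (W i j) from rfl,
      Complex.mul_conj]
  have := congrArg Complex.re h2
  simpa using this

lemma trace_H_re (ε : Fin d → ℝ) (Q A : Matrix (Fin d) (Fin d) ℂ) :
    (Matrix.trace (Q * Matrix.diagonal (fun i => (ε i:ℂ)) * Qᴴ * A)).re
      = ∑ i, ε i * ((Qᴴ * A * Q) i i).re := by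
  have h1 : Q * Matrix.diagonal (fun i => (ε i:ℂ)) * Qᴴ * A
      = Q * (Matrix.diagonal (fun i => (ε i:ℂ)) * (Qᴴ * A)) := by
    simp [Matrix.mul_assoc]
  rw [h1, Matrix.trace_mul_comm]
  have h2 : Matrix.diagonal (fun i => (ε i:ℂ)) * (Qᴴ * A) * Q
      = Matrix.diagonal (fun i => (ε i:ℂ)) * (Qᴴ * A * Q) := by
    simp [Matrix.mul_assoc]
  rw [h2]
  rw [Matrix.trace]
  rw [Complex.re_sum]
  apply Finset.sum_congr rfl
  intro i _
  rw [Matrix.diag_apply, Matrix.diagonal_mul]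
  simp [Complex.re_ofReal_mul]

lemma head_bound (lam : Fin d → ℝ) (τ π : Equiv.Perm (Fin d)) (hτ : Antitone (lam ∘ τ))
    {W : Matrix (Fin d) (Fin d) ℂ} (hW : W ∈ Matrix.unitaryGroup (Fin d) ℂ)
    (m : ℕ) (hm : m ≤ d) :
    ∑ i ∈ Finset.univ.filter (fun i : Fin d => (i:ℕ) < m),
        (∑ j, Complex.normSq (W (π i) j) * lam j)
      ≤ ∑ i ∈ Finset.univ.filter (fun i : Fin d => (i:ℕ) < m), lam (τ i) := by
  set A := Finset.univ.filter (fun i : Fin d => (i:ℕ) < m) with hA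
  set c : Fin d → ℝ := fun j => ∑ i ∈ A, Complex.normSq (W (π i) j) with hc
  have hswap : ∑ i ∈ A, (∑ j, Complex.normSq (W (π i) j) * lam j) = ∑ j, c j * lam j := by
    rw [Finset.sum_comm]
    apply Finset.sum_congr rfl
    intro j _
    rw [hc, Finset.sum_mul]
  rw [hswap]
  apply sum_mul_le_head' lam c τ hτ
  · intro j; exact Finset.sum_nonneg fun i _ => Complex.normSq_nonneg _
  · intro j
    calc c j = ∑ i' ∈ A.image π, Complex.normSq (W i' j) := by
          rw [hc]
          exact (Finset.sum_image (f := fun i' => Complex.normSq (W i' j))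
            (fun a _ b _ h => π.injective h)).symm
      _ ≤ ∑ i', Complex.normSq (W i' j) :=
          Finset.sum_le_sum_of_subset_of_nonneg (Finset.subset_univ _)
            (fun i _ _ => Complex.normSq_nonneg _)
      _ = 1 := unitary_col_sum hW j
  · exact hm
  · rw [show ∑ j, c j = ∑ i ∈ A, ∑ j, Complex.normSq (W (π i) j) from Finset.sum_comm]
    rw [Finset.sum_congr rfl (fun i _ => unitary_row_sum hW (π i))]
    simp [hA, card_filter_fin_lt m hm]

lemma ergotropy_isGreatest (hd : 0 < d) (ε : Fin d → ℝ) (hε : Monotone ε)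
    {Q : Matrix (Fin d) (Fin d) ℂ} (hQ : Q ∈ Matrix.unitaryGroup (Fin d) ℂ)
    (lam : Fin d → ℝ) (τ : Equiv.Perm (Fin d)) (hτ : Antitone (lam ∘ τ))
    {V : Matrix (Fin d) (Fin d) ℂ} (hV : V ∈ Matrix.unitaryGroup (Fin d) ℂ)
    {ω : Matrix (Fin d) (Fin d) ℂ}
    (hω : ω = V * Matrix.diagonal (fun i => (lam i:ℂ)) * Vᴴ)
    {H : Matrix (Fin d) (Fin d) ℂ}
    (hH : H = Q * Matrix.diagonal (fun i => (ε i : ℂ)) * Qᴴ) :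
    IsGreatest {v : ℝ | ∃ U ∈ Matrix.unitaryGroup (Fin d) ℂ,
        v = (Matrix.trace (H * ω)).re - (Matrix.trace (H * U * ω * Uᴴ)).re}
      ((Matrix.trace (H * ω)).re - ∑ i, ε i * lam (τ i)) := by
  have key2 : ∀ U ∈ Matrix.unitaryGroup (Fin d) ℂ,
      (Matrix.trace (H * U * ω * Uᴴ)).re
        = ∑ i, ε i * (∑ j, Complex.normSq ((Qᴴ * U * V) i j) * lam j) := by
    intro U hU
    have h1 : H * U * ω * Uᴴ
        = Q * Matrix.diagonal (fun i => (ε i:ℂ)) * Qᴴ * (U * ω * Uᴴ) := by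
      rw [hH]; simp [Matrix.mul_assoc]
    have h2 : Qᴴ * (U * ω * Uᴴ) * Q
        = (Qᴴ * U * V) * Matrix.diagonal (fun i => (lam i:ℂ)) * (Qᴴ * U * V)ᴴ := by
      rw [hω]
      simp only [Matrix.conjTranspose_mul, Matrix.conjTranspose_conjTranspose,
        Matrix.mul_assoc]
    rw [h1, trace_H_re, ]
    apply Finset.sum_congr rfl
    intro i _
    rw [h2, conj_diag_entry]
    simp
  constructor
  · -- membership: the optimal unitary
    set P : Matrix (Fin d) (Fin d) ℂ := fun i j => if τ i = j then 1 else 0 with hPdef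
    have hP1 : P * Pᴴ = 1 := by
      ext i k
      rw [Matrix.mul_apply, Matrix.one_apply]
      have : ∀ j, P i j * Pᴴ j k
          = if j = τ i then (if i = k then (1:ℂ) else 0) else 0 := by
        intro j
        rw [Matrix.conjTranspose_apply, hPdef]
        by_cases h1 : τ i = j <;> by_cases h2 : τ k = j
        · have : i = k := τ.injective (h1.trans h2.symm)
          simp [h1, h2, this]
        · have : ¬ i = k := fun h => h2 (h ▸ h1)
          simp [h1, h2, this]
        · have : ¬ j = τ i := fun hh => h1 hh.symm
          simp [h1, h2, this]
        · have : ¬ j = τ i := fun hh => h1 hh.symm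
          simp [h1, h2, this]
      rw [Finset.sum_congr rfl (fun j _ => this j), Finset.sum_ite_eq' Finset.univ (τ i)]
      simp
    set U₀ : Matrix (Fin d) (Fin d) ℂ := Q * P * Vᴴ with hU₀
    have hU₀mem : U₀ ∈ Matrix.unitaryGroup (Fin d) ℂ := by
      rw [Matrix.mem_unitaryGroup_iff, Matrix.star_eq_conjTranspose]
      have e1 : U₀ * U₀ᴴ = Q * (P * ((Vᴴ * V) * (Pᴴ * Qᴴ))) := by
        rw [hU₀]
        simp only [Matrix.conjTranspose_mul, Matrix.conjTranspose_conjTranspose,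
          Matrix.mul_assoc]
      rw [e1, ct_mul_unit hV, Matrix.one_mul, ← Matrix.mul_assoc, ← Matrix.mul_assoc,
        Matrix.mul_assoc Q P, hP1, Matrix.mul_one, unit_mul_ct hQ]
    refine ⟨U₀, hU₀mem, ?_⟩
    have hQUV : Qᴴ * U₀ * V = P := by
      rw [hU₀]
      have : Qᴴ * (Q * P * Vᴴ) * V = (Qᴴ * Q) * (P * (Vᴴ * V)) := by
        simp only [Matrix.mul_assoc]
      rw [this, ct_mul_unit hQ, ct_mul_unit hV, Matrix.one_mul, Matrix.mul_one]
    rw [key2 U₀ hU₀mem, hQUV]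
    congr 1
    apply Finset.sum_congr rfl
    intro i _
    congr 1
    have : ∀ j, Complex.normSq (P i j) * lam j = if j = τ i then lam j else 0 := by
      intro j
      rw [hPdef]
      by_cases h : τ i = j
      · simp [h, eq_comm]
      · have : ¬ j = τ i := fun hh => h hh.symm
        simp [h, this]
    rw [Finset.sum_congr rfl (fun j _ => this j), Finset.sum_ite_eq' Finset.univ (τ i)]
    simp
  · -- upper bound
    rintro v ⟨U, hU, rfl⟩
    have hW : Qᴴ * U * V ∈ Matrix.unitaryGroup (Fin d) ℂ := by
      apply mul_mem _ hV
      apply mul_mem _ hU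
      rw [← Matrix.star_eq_conjTranspose]
      exact Unitary.star_mem hQ
    have hle : ∑ i, ε i * lam (τ i)
        ≤ ∑ i, ε i * (∑ j, Complex.normSq ((Qᴴ * U * V) i j) * lam j) := by
      apply abel_compare hd ε _ _ hε
      · rw [Equiv.sum_comp τ lam]
        rw [Finset.sum_comm]
        symm
        calc ∑ j, ∑ i, Complex.normSq ((Qᴴ * U * V) i j) * lam j
            = ∑ j, (∑ i, Complex.normSq ((Qᴴ * U * V) i j)) * lam j := by
              apply Finset.sum_congr rfl; intro j _; rw [Finset.sum_mul]
          _ = ∑ j, lam j := by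
              apply Finset.sum_congr rfl; intro j _; rw [unitary_col_sum hW j, one_mul]
      · intro m hm0 hmd
        simpa using head_bound lam τ (Equiv.refl (Fin d)) hτ hW m (le_of_lt hmd)
    rw [key2 U hU]
    linarith

/-- Lemma 1: for a Hamiltonian `H = Q diag(ε) Qᴴ` with `ε` nondecreasing, over the feasible set
`Ω` of density matrices with prescribed energy-basis probabilities `⟨ε_i|ω|ε_i⟩ = p_i`, the
minimum ergotropy (`E(ω,H) = max_U [tr(Hω) − tr(H U ω Uᴴ)]`) is attained at the dephased state
`ρ* = Q diag(p) Qᴴ` and equals `Σ_i p_i ε_i − Σ_i p^↓_i ε_i`, where `p^↓ = p ∘ σ` is the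
nonincreasing rearrangement of `p`. -/
theorem stmt9 {d : ℕ} (hd : 0 < d)
    (ε p : Fin d → ℝ) (hε : Monotone ε)
    (hp : ∀ i, 0 ≤ p i) (hp1 : ∑ i, p i = 1)
    (σ : Equiv.Perm (Fin d)) (hσ : Antitone (p ∘ σ))
    (Q : Matrix (Fin d) (Fin d) ℂ) (hQ : Q ∈ Matrix.unitaryGroup (Fin d) ℂ)
    (H : Matrix (Fin d) (Fin d) ℂ)
    (hH : H = Q * Matrix.diagonal (fun i => (ε i : ℂ)) * Qᴴ)
    (Ω : Set (Matrix (Fin d) (Fin d) ℂ))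
    (hΩ : Ω = {ω | ω.PosSemidef ∧ ω.trace = 1 ∧ ∀ i, (Qᴴ * ω * Q) i i = (p i : ℂ)})
    (ρstar : Matrix (Fin d) (Fin d) ℂ)
    (hρstar : ρstar = Q * Matrix.diagonal (fun i => (p i : ℂ)) * Qᴴ) :
    IsLeast {w : ℝ | ∃ ω ∈ Ω,
        w = sSup {v : ℝ | ∃ U ∈ Matrix.unitaryGroup (Fin d) ℂ,
              v = (Matrix.trace (H * ω)).re - (Matrix.trace (H * U * ω * Uᴴ)).re}}
      ((∑ i, p i * ε i) - ∑ i, p (σ i) * ε i)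
    ∧ sSup {v : ℝ | ∃ U ∈ Matrix.unitaryGroup (Fin d) ℂ,
          v = (Matrix.trace (H * ρstar)).re - (Matrix.trace (H * U * ρstar * Uᴴ)).re}
        = (∑ i, p i * ε i) - ∑ i, p (σ i) * ε i := by
  have hQQ : Qᴴ * Q = 1 := ct_mul_unit hQ
  have hQρQ : Qᴴ * ρstar * Q = Matrix.diagonal (fun i => (p i : ℂ)) := by
    rw [hρstar]
    have : Qᴴ * (Q * Matrix.diagonal (fun i => (p i : ℂ)) * Qᴴ) * Q
        = (Qᴴ * Q) * (Matrix.diagonal (fun i => (p i : ℂ)) * (Qᴴ * Q)) := by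
      simp only [Matrix.mul_assoc]
    rw [this, hQQ, Matrix.one_mul, Matrix.mul_one]
  have hρdiag : ∀ i, (Qᴴ * ρstar * Q) i i = (p i : ℂ) := by
    intro i; rw [hQρQ, Matrix.diagonal_apply_eq]
  have hρΩ : ρstar ∈ Ω := by
    rw [hΩ]
    refine ⟨?_, ?_, hρdiag⟩
    · rw [hρstar]
      exact (Matrix.posSemidef_diagonal_iff.mpr fun i =>
        Complex.zero_le_real.mpr (hp i)).mul_mul_conjTranspose_same Q
    · rw [hρstar, Matrix.trace_mul_cycle, hQQ, Matrix.one_mul, Matrix.trace_diagonal]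
      exact_mod_cast congrArg Complex.ofReal hp1
  have htrH : ∀ ω : Matrix (Fin d) (Fin d) ℂ, (∀ i, (Qᴴ * ω * Q) i i = (p i:ℂ)) →
      (Matrix.trace (H * ω)).re = ∑ i, ε i * p i := by
    intro ω hdiag
    rw [hH, trace_H_re]
    apply Finset.sum_congr rfl
    intro i _
    rw [hdiag i, Complex.ofReal_re]
  have hρIG := ergotropy_isGreatest hd ε hε hQ p σ hσ hQ hρstar hH
  have e2 : ∑ i, p (σ i) * ε i = ∑ i, ε i * p (σ i) :=
    Finset.sum_congr rfl fun i _ => mul_comm _ _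
  have e1 : ∑ i, p i * ε i = ∑ i, ε i * p i :=
    Finset.sum_congr rfl fun i _ => mul_comm _ _
  have hsupρ : sSup {v : ℝ | ∃ U ∈ Matrix.unitaryGroup (Fin d) ℂ,
          v = (Matrix.trace (H * ρstar)).re - (Matrix.trace (H * U * ρstar * Uᴴ)).re}
        = (∑ i, p i * ε i) - ∑ i, p (σ i) * ε i := by
    rw [hρIG.csSup_eq, htrH ρstar hρdiag, e1, e2]
  refine ⟨⟨⟨ρstar, hρΩ, hsupρ.symm⟩, ?_⟩, hsupρ⟩
  rintro w ⟨ω, hωΩ, rfl⟩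
  rw [hΩ] at hωΩ
  obtain ⟨hPSD, htr1, hdiag⟩ := hωΩ
  have hHerm := hPSD.1
  set lam : Fin d → ℝ := hHerm.eigenvalues with hlam
  set V : Matrix (Fin d) (Fin d) ℂ := (hHerm.eigenvectorUnitary : Matrix (Fin d) (Fin d) ℂ)
    with hVdef
  have hVmem : V ∈ Matrix.unitaryGroup (Fin d) ℂ := SetLike.coe_mem _
  have hspec : ω = V * Matrix.diagonal (fun i => (lam i : ℂ)) * Vᴴ := by
    rw [← Matrix.star_eq_conjTranspose]
    exact hHerm.spectral_theorem
  set τ : Equiv.Perm (Fin d) := Tuple.sort (fun i => -lam i) with hτdef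
  have hτ : Antitone (lam ∘ τ) := by
    intro a b hab
    have h := Tuple.monotone_sort (fun i => -lam i) hab
    simp only [Function.comp_apply] at h ⊢
    have : -lam (τ a) ≤ -lam (τ b) := h
    linarith
  have hIG := ergotropy_isGreatest hd ε hε hQ lam τ hτ hVmem hspec hH
  rw [hIG.csSup_eq, htrH ω hdiag]
  have hlamsum : ∑ i, lam i = 1 := by
    have h1 : Matrix.trace ω = ((∑ i, lam i : ℝ) : ℂ) := by
      rw [hspec, Matrix.trace_mul_cycle, ct_mul_unit hVmem, Matrix.one_mul,
        Matrix.trace_diagonal]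
      push_cast
      rfl
    rw [htr1] at h1
    exact_mod_cast h1.symm
  have pω : ∀ k, p k = ∑ j, Complex.normSq ((Qᴴ * V) k j) * lam j := by
    intro k
    have h2 : Qᴴ * ω * Q
        = (Qᴴ * V) * Matrix.diagonal (fun i => (lam i:ℂ)) * (Qᴴ * V)ᴴ := by
      rw [hspec]
      simp only [Matrix.conjTranspose_mul, Matrix.conjTranspose_conjTranspose,
        Matrix.mul_assoc]
    have h3 := hdiag k
    rw [h2, conj_diag_entry] at h3
    exact_mod_cast h3.symm
  have hWmem : Qᴴ * V ∈ Matrix.unitaryGroup (Fin d) ℂ := by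
    apply mul_mem _ hVmem
    rw [← Matrix.star_eq_conjTranspose]
    exact Unitary.star_mem hQ
  have hschur : ∑ i, ε i * lam (τ i) ≤ ∑ i, ε i * p (σ i) := by
    apply abel_compare hd ε _ _ hε
    · rw [Equiv.sum_comp τ lam, Equiv.sum_comp σ p, hlamsum, hp1]
    · intro m hm0 hmd
      calc ∑ i ∈ Finset.univ.filter (fun i : Fin d => (i:ℕ) < m), p (σ i)
          = ∑ i ∈ Finset.univ.filter (fun i : Fin d => (i:ℕ) < m),
              ∑ j, Complex.normSq ((Qᴴ * V) (σ i) j) * lam j :=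
            Finset.sum_congr rfl (fun i _ => pω (σ i))
        _ ≤ ∑ i ∈ Finset.univ.filter (fun i : Fin d => (i:ℕ) < m), lam (τ i) :=
            head_bound lam τ σ hτ hWmem m (le_of_lt hmd)
  rw [e1, e2]
  linarith
end

section
/- For a density matrix ω with energy-basis diagonal probabilities p_i = ⟨ε_i|ω|ε_i⟩, the ergotropy of the dephased state equals the incoherent ergotropy: E(D(ω),H) = Σ_i p_i ε_i − Σ_i p_i^↓ ε_i, and this is a lower bound on E(ω,H). -/
open Matrix BigOperators Finset
open scoped ComplexOrder

section aux

-- ## Combinatorial part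

lemma suffix_bound (d t : ℕ) (htd : t ≤ d) (b r : ℕ → ℝ)
    (hb : ∀ i j, i ≤ j → j < d → b j ≤ b i)
    (hr0 : ∀ j, j < d → 0 ≤ r j) (hr1 : ∀ j, j < d → r j ≤ 1)
    (hsum : ∑ j ∈ range d, r j = (d - t : ℕ)) :
    ∑ j ∈ Ico t d, b j ≤ ∑ j ∈ range d, r j * b j := by
  rcases eq_or_lt_of_le htd with heq | htd'
  · subst heq
    simp only [Ico_self, sum_empty]
    have hz : ∀ j ∈ range t, r j = 0 := by
      intro j hj
      have h0 : ∑ j ∈ range t, r j = 0 := by simp [hsum]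
      exact (Finset.sum_eq_zero_iff_of_nonneg (fun j hj => hr0 j (mem_range.1 hj))).1 h0 j hj
    calc (0:ℝ) = ∑ j ∈ range t, (0:ℝ) * b j := by simp
    _ = ∑ j ∈ range t, r j * b j := by
        refine Finset.sum_congr rfl fun j hj => ?_; rw [hz j hj]
    _ ≤ ∑ j ∈ range t, r j * b j := le_refl _
  · have hsplit : ∑ j ∈ range t, r j * b j + ∑ j ∈ Ico t d, r j * b j
        = ∑ j ∈ range d, r j * b j := Finset.sum_range_add_sum_Ico _ htd
    have h1 : ∑ j ∈ range t, r j * b t ≤ ∑ j ∈ range t, r j * b j := by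
      refine Finset.sum_le_sum fun j hj => ?_
      have hj' := mem_range.1 hj
      exact mul_le_mul_of_nonneg_left (hb j t (le_of_lt hj') htd') (hr0 j (lt_of_lt_of_le hj' htd))
    have h2 : ∑ j ∈ Ico t d, (1 - r j) * b j ≤ ∑ j ∈ Ico t d, (1 - r j) * b t := by
      refine Finset.sum_le_sum fun j hj => ?_
      obtain ⟨hj1, hj2⟩ := mem_Ico.1 hj
      exact mul_le_mul_of_nonneg_left (hb t j hj1 hj2) (by linarith [hr1 j hj2])
    have hzero : ∑ j ∈ range t, r j * b t - ∑ j ∈ Ico t d, (1 - r j) * b t = 0 := by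
      have hc : ∑ j ∈ Ico t d, (1:ℝ) = (d - t : ℕ) := by simp
      have : ∑ j ∈ range t, r j + ∑ j ∈ Ico t d, r j = (d - t : ℕ) := by
        rw [Finset.sum_range_add_sum_Ico _ htd]; exact hsum
      simp only [sub_mul, Finset.sum_sub_distrib, ← Finset.sum_mul]
      rw [hc]; linear_combination (b t) * this
    have expand : ∑ j ∈ range d, r j * b j - ∑ j ∈ Ico t d, b j
        = ∑ j ∈ range t, r j * b j - ∑ j ∈ Ico t d, (1 - r j) * b j := by
      rw [← hsplit]; simp [sub_mul, Finset.sum_sub_distrib]; ring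
    linarith

lemma abel_nonneg (d : ℕ) (a h : ℕ → ℝ)
    (ha : ∀ i, i + 1 < d → a i ≤ a (i + 1))
    (htot : ∑ i ∈ range d, h i = 0)
    (hsuf : ∀ t, t < d → 0 ≤ ∑ j ∈ Ico t d, h j) :
    0 ≤ ∑ i ∈ range d, a i * h i := by
  have hby := Finset.sum_range_by_parts a h d
  simp only [smul_eq_mul] at hby
  rw [hby, htot, mul_zero, zero_sub, neg_nonneg]
  refine Finset.sum_nonpos fun i hi => ?_
  have hi' : i < d - 1 := mem_range.1 hi
  have hi1 : i + 1 < d := by omega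
  have hpre : ∑ j ∈ range (i+1), h j = - ∑ j ∈ Ico (i+1) d, h j := by
    have := Finset.sum_range_add_sum_Ico h (le_of_lt hi1)
    linarith
  rw [hpre]
  have h1 : 0 ≤ a (i+1) - a i := by linarith [ha i hi1]
  have h2 : 0 ≤ ∑ j ∈ Ico (i+1) d, h j := hsuf (i+1) hi1
  nlinarith

lemma ds_bound (d : ℕ) (a b : ℕ → ℝ) (B : ℕ → ℕ → ℝ)
    (ha : ∀ i, i + 1 < d → a i ≤ a (i + 1))
    (hb : ∀ i j, i ≤ j → j < d → b j ≤ b i)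
    (hB0 : ∀ i j, i < d → j < d → 0 ≤ B i j)
    (hrow : ∀ i, i < d → ∑ j ∈ range d, B i j = 1)
    (hcol : ∀ j, j < d → ∑ i ∈ range d, B i j = 1) :
    ∑ i ∈ range d, a i * b i ≤ ∑ i ∈ range d, ∑ j ∈ range d, a i * (B i j * b j) := by
  set h : ℕ → ℝ := fun i => (∑ j ∈ range d, B i j * b j) - b i with hh
  have key : 0 ≤ ∑ i ∈ range d, a i * h i := by
    apply abel_nonneg d a h ha
    · simp only [hh, Finset.sum_sub_distrib]
      rw [Finset.sum_comm]
      have : ∀ j ∈ range d, ∑ i ∈ range d, B i j * b j = b j := by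
        intro j hj
        rw [← Finset.sum_mul, hcol j (mem_range.1 hj), one_mul]
      rw [Finset.sum_congr rfl this, sub_self]
    · intro t htd
      simp only [hh, Finset.sum_sub_distrib, sub_nonneg]
      rw [Finset.sum_comm]
      have hre : ∀ j ∈ range d, ∑ i ∈ Ico t d, B i j * b j = (∑ i ∈ Ico t d, B i j) * b j := by
        intro j _; rw [Finset.sum_mul]
      calc ∑ i ∈ Ico t d, b i
          ≤ ∑ j ∈ range d, (∑ i ∈ Ico t d, B i j) * b j := by
            apply suffix_bound d t (le_of_lt htd) b _ hb
            · intro j hj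
              exact Finset.sum_nonneg fun i hi => hB0 i j ((mem_Ico.1 hi).2) hj
            · intro j hj
              calc ∑ i ∈ Ico t d, B i j ≤ ∑ i ∈ range d, B i j := by
                    apply Finset.sum_le_sum_of_subset_of_nonneg
                    · intro x hx; exact mem_range.2 (mem_Ico.1 hx).2
                    · intro i hi _; exact hB0 i j (mem_range.1 hi) hj
                _ = 1 := hcol j hj
            · rw [Finset.sum_comm]
              have : ∀ i ∈ Ico t d, ∑ j ∈ range d, B i j = 1 := fun i hi =>
                hrow i (mem_Ico.1 hi).2
              rw [Finset.sum_congr rfl this]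
              simp
        _ = ∑ j ∈ range d, ∑ i ∈ Ico t d, B i j * b j := by
            rw [Finset.sum_congr rfl hre]
  have expand : ∑ i ∈ range d, a i * h i
      = ∑ i ∈ range d, ∑ j ∈ range d, a i * (B i j * b j) - ∑ i ∈ range d, a i * b i := by
    simp only [hh, mul_sub, Finset.sum_sub_distrib, Finset.mul_sum]
  linarith [key, expand.symm ▸ key]

lemma ds_bound_fin {d : ℕ} (a b : Fin d → ℝ) (B : Fin d → Fin d → ℝ)
    (ha : Monotone a) (hb : Antitone b) (hB0 : ∀ i j, 0 ≤ B i j)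
    (hrow : ∀ i, ∑ j, B i j = 1) (hcol : ∀ j, ∑ i, B i j = 1) :
    ∑ i, a i * b i ≤ ∑ i, ∑ j, a i * (B i j * b j) := by
  set a' : ℕ → ℝ := fun n => if h : n < d then a ⟨n, h⟩ else 0 with ha'
  set b' : ℕ → ℝ := fun n => if h : n < d then b ⟨n, h⟩ else 0 with hb'
  set B' : ℕ → ℕ → ℝ := fun m n => if h : m < d ∧ n < d then B ⟨m, h.1⟩ ⟨n, h.2⟩ else 0 with hB'
  have conv : ∀ (f : Fin d → ℝ), ∑ i : Fin d, f i
      = ∑ n ∈ range d, (fun n => if h : n < d then f ⟨n, h⟩ else 0) n := by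
    intro f
    rw [← Fin.sum_univ_eq_sum_range (fun n => if h : n < d then f ⟨n, h⟩ else 0) d]
    exact Finset.sum_congr rfl (fun i _ => by simp [i.isLt])
  have main := ds_bound d a' b' B'
    (fun i hi => by
      simp only [ha', dif_pos (Nat.lt_of_succ_lt hi), dif_pos hi]
      exact ha (by simp [Fin.le_def]))
    (fun i j hij hj => by
      simp only [hb', dif_pos hj, dif_pos (lt_of_le_of_lt hij hj)]
      exact hb (by simp [Fin.le_def, hij]))
    (fun i j hi hj => by simp only [hB', dif_pos (And.intro hi hj)]; exact hB0 _ _)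
    (fun i hi => by
      rw [← hrow ⟨i, hi⟩, conv (fun j => B ⟨i, hi⟩ j)]
      refine Finset.sum_congr rfl fun n hn => ?_
      have hn' := mem_range.1 hn
      simp [hB', hi, hn'])
    (fun j hj => by
      rw [← hcol ⟨j, hj⟩, conv (fun i => B i ⟨j, hj⟩)]
      refine Finset.sum_congr rfl fun n hn => ?_
      have hn' := mem_range.1 hn
      simp [hB', hj, hn'])
  calc ∑ i, a i * b i = ∑ i ∈ range d, a' i * b' i := by
        rw [conv (fun i => a i * b i)]
        refine Finset.sum_congr rfl fun n hn => ?_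
        have hn' := mem_range.1 hn
        simp [ha', hb', hn']
    _ ≤ ∑ i ∈ range d, ∑ j ∈ range d, a' i * (B' i j * b' j) := main
    _ = ∑ i, ∑ j, a i * (B i j * b j) := by
        rw [conv (fun i => ∑ j, a i * (B i j * b j))]
        refine Finset.sum_congr rfl fun n hn => ?_
        have hn' := mem_range.1 hn
        simp only [dif_pos hn']
        rw [conv (fun j => a ⟨n, hn'⟩ * (B ⟨n, hn'⟩ j * b j))]
        refine Finset.sum_congr rfl fun m hm => ?_
        have hm' := mem_range.1 hm
        simp [ha', hb', hB', hn', hm']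

-- ## Matrix part

variable {d : ℕ}

lemma trace_conj {Q X : Matrix (Fin d) (Fin d) ℂ} (hQ : Qᴴ * Q = 1) :
    trace (Q * X * Qᴴ) = trace X := by
  rw [Matrix.trace_mul_comm, ← Matrix.mul_assoc, hQ, Matrix.one_mul]

lemma trace_form (ε p : Fin d → ℝ) (V : Matrix (Fin d) (Fin d) ℂ) :
    (trace (Matrix.diagonal (fun i => (ε i : ℂ)) * (V * Matrix.diagonal (fun i => (p i : ℂ)) * Vᴴ))).re
      = ∑ i, ∑ j, ε i * (Complex.normSq (V i j) * p j) := by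
  rw [Matrix.trace, Complex.re_sum]
  refine Finset.sum_congr rfl fun i _ => ?_
  rw [Matrix.diag_apply, Matrix.diagonal_mul, Matrix.mul_apply]
  rw [Finset.mul_sum, Complex.re_sum]
  refine Finset.sum_congr rfl fun j _ => ?_
  rw [Matrix.mul_diagonal, Matrix.conjTranspose_apply]
  have : (ε i : ℂ) * (V i j * (p j : ℂ) * star (V i j))
      = ((ε i * (Complex.normSq (V i j) * p j) : ℝ) : ℂ) := by
    rw [Complex.star_def, mul_comm (V i j) ((p j : ℂ)), mul_assoc, Complex.mul_conj]
    push_cast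
    ring
  rw [this, Complex.ofReal_re]

lemma row_sum_normSq {V : Matrix (Fin d) (Fin d) ℂ} (hV : V * Vᴴ = 1) (i : Fin d) :
    ∑ j, Complex.normSq (V i j) = 1 := by
  have h1 : (V * Vᴴ) i i = 1 := by rw [hV]; simp [Matrix.one_apply]
  rw [Matrix.mul_apply] at h1
  have h2 : ∀ j, V i j * Vᴴ j i = ((Complex.normSq (V i j) : ℝ) : ℂ) := by
    intro j
    rw [Matrix.conjTranspose_apply, Complex.star_def, Complex.mul_conj]
  rw [Finset.sum_congr rfl (fun j _ => h2 j)] at h1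
  have := congrArg Complex.re h1
  simpa [Complex.re_sum] using this

lemma col_sum_normSq {V : Matrix (Fin d) (Fin d) ℂ} (hV : Vᴴ * V = 1) (j : Fin d) :
    ∑ i, Complex.normSq (V i j) = 1 := by
  have h1 : (Vᴴ * V) j j = 1 := by rw [hV]; simp [Matrix.one_apply]
  rw [Matrix.mul_apply] at h1
  have h2 : ∀ i, Vᴴ j i * V i j = ((Complex.normSq (V i j) : ℝ) : ℂ) := by
    intro i
    rw [Matrix.conjTranspose_apply, Complex.star_def, mul_comm, Complex.mul_conj]
  rw [Finset.sum_congr rfl (fun i _ => h2 i)] at h1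
  have := congrArg Complex.re h1
  simpa [Complex.re_sum] using this

lemma pmat_unitary (σ : Equiv.Perm (Fin d)) :
    let P : Matrix (Fin d) (Fin d) ℂ := Matrix.of fun i j => if j = σ i then 1 else 0
    P * Pᴴ = 1 ∧ Pᴴ * P = 1 := by
  intro P
  constructor
  · ext i k
    simp [Matrix.mul_apply, Matrix.one_apply, apply_ite (star : ℂ → ℂ), P,
      Finset.sum_ite_eq, Finset.sum_ite_eq', EmbeddingLike.apply_eq_iff_eq, eq_comm,
      ite_and, mul_ite, ite_mul]
  · ext j l
    rw [Matrix.mul_apply]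
    simp only [P, Matrix.conjTranspose_apply, Matrix.of_apply, apply_ite (star : ℂ → ℂ),
      star_one, star_zero]
    simp only [ite_mul, one_mul, zero_mul]
    have : ∀ i, (if j = σ i then if l = σ i then (1:ℂ) else 0 else 0)
        = if i = σ⁻¹ j then (if l = σ i then (1:ℂ) else 0) else 0 := by
      intro i
      by_cases h : i = σ⁻¹ j
      · subst h; simp
      · have : ¬ j = σ i := by
          intro hc; exact h (by rw [hc]; simp)
        rw [Equiv.Perm.inv_def] at h; simp [this, h]
    rw [Finset.sum_congr rfl (fun i _ => this i), Finset.sum_ite_eq' Finset.univ (σ⁻¹ j) _]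
    simp [Matrix.one_apply]
    by_cases h : l = j
    · subst h; simp
    · rw [if_neg h, if_neg (fun hh : j = l => h hh.symm)]

lemma pmat_conj_diag (σ : Equiv.Perm (Fin d)) (M : Matrix (Fin d) (Fin d) ℂ) (i : Fin d) :
    let P : Matrix (Fin d) (Fin d) ℂ := Matrix.of fun i j => if j = σ i then 1 else 0
    (P * M * Pᴴ) i i = M (σ i) (σ i) := by
  intro P
  rw [Matrix.mul_apply]
  have h1 : ∀ k, (P * M) i k * Pᴴ k i = if k = σ i then (P * M) i k else 0 := by
    intro k
    simp only [P, Matrix.conjTranspose_apply, Matrix.of_apply, apply_ite (star : ℂ → ℂ),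
      star_one, star_zero]
    by_cases h : k = σ i <;> simp [h]
  rw [Finset.sum_congr rfl (fun k _ => h1 k), Finset.sum_ite_eq' Finset.univ (σ i) _]
  simp only [Finset.mem_univ, if_true]
  rw [Matrix.mul_apply]
  have h2 : ∀ j, P i j * M j (σ i) = if j = σ i then M j (σ i) else 0 := by
    intro j
    simp only [P, Matrix.of_apply]
    by_cases h : j = σ i <;> simp [h]
  rw [Finset.sum_congr rfl (fun j _ => h2 j), Finset.sum_ite_eq' Finset.univ (σ i) _]
  simp

end aux

/-- For a density matrix `ω` with energy-basis diagonal probabilities `p_i = ⟨ε_i|ω|ε_i⟩`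
(energies `ε` nondecreasing, `H = Q diag(ε) Qᴴ`), the ergotropy of the dephased state
`D(ω) = Q diag(p) Qᴴ` equals the incoherent ergotropy `Σ_i p_i ε_i − Σ_i p^↓_i ε_i`
(`p^↓ = p ∘ σ` nonincreasing), and it lower bounds the ergotropy of `ω`. -/
theorem stmt10 {d : ℕ} (hd : 0 < d)
    (ε p : Fin d → ℝ) (hε : Monotone ε)
    (σ : Equiv.Perm (Fin d)) (hσ : Antitone (p ∘ σ))
    (Q : Matrix (Fin d) (Fin d) ℂ) (hQ : Q ∈ Matrix.unitaryGroup (Fin d) ℂ)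
    (H : Matrix (Fin d) (Fin d) ℂ)
    (hH : H = Q * Matrix.diagonal (fun i => (ε i : ℂ)) * Qᴴ)
    (ω : Matrix (Fin d) (Fin d) ℂ) (hωpos : ω.PosSemidef) (hωtr : ω.trace = 1)
    (hpdef : ∀ i, (Qᴴ * ω * Q) i i = (p i : ℂ))
    (Dω : Matrix (Fin d) (Fin d) ℂ)
    (hDω : Dω = Q * Matrix.diagonal (fun i => (p i : ℂ)) * Qᴴ) :
    sSup {v : ℝ | ∃ U ∈ Matrix.unitaryGroup (Fin d) ℂ,
        v = (Matrix.trace (H * Dω)).re - (Matrix.trace (H * U * Dω * Uᴴ)).re}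
      = (∑ i, p i * ε i) - ∑ i, p (σ i) * ε i
    ∧ sSup {v : ℝ | ∃ U ∈ Matrix.unitaryGroup (Fin d) ℂ,
          v = (Matrix.trace (H * Dω)).re - (Matrix.trace (H * U * Dω * Uᴴ)).re}
      ≤ sSup {v : ℝ | ∃ U ∈ Matrix.unitaryGroup (Fin d) ℂ,
          v = (Matrix.trace (H * ω)).re - (Matrix.trace (H * U * ω * Uᴴ)).re} := by
  classical
  set Dε : Matrix (Fin d) (Fin d) ℂ := Matrix.diagonal (fun i => (ε i : ℂ)) with hDε
  set Dp : Matrix (Fin d) (Fin d) ℂ := Matrix.diagonal (fun i => (p i : ℂ)) with hDp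
  have hQ1 : Qᴴ * Q = 1 := by
    have := (Matrix.mem_unitaryGroup_iff').1 hQ
    rwa [Matrix.star_eq_conjTranspose] at this
  have hQ2 : Q * Qᴴ = 1 := by
    have := (Matrix.mem_unitaryGroup_iff).1 hQ
    rwa [Matrix.star_eq_conjTranspose] at this
  have hQc : ∀ X : Matrix (Fin d) (Fin d) ℂ, Qᴴ * (Q * X) = X := by
    intro X; rw [← Matrix.mul_assoc, hQ1, Matrix.one_mul]
  have hQc' : ∀ X : Matrix (Fin d) (Fin d) ℂ, Q * (Qᴴ * X) = X := by
    intro X; rw [← Matrix.mul_assoc, hQ2, Matrix.one_mul]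
  -- the permutation matrix
  set P : Matrix (Fin d) (Fin d) ℂ := Matrix.of (fun i j => if j = σ i then 1 else 0) with hP
  obtain ⟨hP2, hP1⟩ := pmat_unitary σ
  rw [← hP] at hP1 hP2
  have hPc : ∀ X : Matrix (Fin d) (Fin d) ℂ, P * (Pᴴ * X) = X := by
    intro X; rw [← Matrix.mul_assoc, hP2, Matrix.one_mul]
  set U₀ : Matrix (Fin d) (Fin d) ℂ := Q * P * Qᴴ with hU₀
  have hU₀mem : U₀ ∈ Matrix.unitaryGroup (Fin d) ℂ := by
    rw [Matrix.mem_unitaryGroup_iff, Matrix.star_eq_conjTranspose]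
    rw [hU₀]
    simp only [Matrix.conjTranspose_mul, Matrix.conjTranspose_conjTranspose]
    calc Q * P * Qᴴ * (Q * (Pᴴ * Qᴴ)) = Q * (P * (Qᴴ * (Q * (Pᴴ * Qᴴ)))) := by
          simp only [Matrix.mul_assoc]
      _ = 1 := by rw [hQc, hPc, hQ2]
  -- reduction for the dephased state
  have hred : ∀ U : Matrix (Fin d) (Fin d) ℂ,
      H * U * Dω * Uᴴ = Q * (Dε * ((Qᴴ * U * Q) * Dp * (Qᴴ * U * Q)ᴴ)) * Qᴴ := by
    intro U
    rw [hH, hDω]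
    simp only [Matrix.conjTranspose_mul, Matrix.conjTranspose_conjTranspose]
    simp only [Matrix.mul_assoc, hQ2, Matrix.mul_one]
  -- trace of H * Dω
  have htrace_diag : ∀ M : Matrix (Fin d) (Fin d) ℂ,
      trace (Dε * M) = ∑ i, (ε i : ℂ) * M i i := by
    intro M
    rw [Matrix.trace]
    refine Finset.sum_congr rfl fun i _ => ?_
    rw [Matrix.diag_apply, Matrix.diagonal_mul]
  have htrHDω : (trace (H * Dω)).re = ∑ i, ε i * p i := by
    have hmat : H * Dω = Q * (Dε * Dp) * Qᴴ := by
      rw [hH, hDω]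
      calc Q * Dε * Qᴴ * (Q * Dp * Qᴴ) = Q * (Dε * (Qᴴ * (Q * (Dp * Qᴴ)))) := by
            simp only [Matrix.mul_assoc]
        _ = Q * (Dε * Dp) * Qᴴ := by rw [hQc]; simp only [Matrix.mul_assoc]
    rw [hmat, trace_conj hQ1, Matrix.diagonal_mul_diagonal, Matrix.trace_diagonal]
    rw [Complex.re_sum]
    refine Finset.sum_congr rfl fun i _ => ?_
    rw [← Complex.ofReal_mul, Complex.ofReal_re]
  -- trace of H * ω
  have htrHω : (trace (H * ω)).re = ∑ i, ε i * p i := by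
    have hmat : trace (H * ω) = trace (Dε * (Qᴴ * ω * Q)) := by
      rw [hH]
      have e1 : Q * Dε * Qᴴ * ω = Q * (Dε * (Qᴴ * ω)) := by simp only [Matrix.mul_assoc]
      rw [e1, Matrix.trace_mul_comm]
      simp only [Matrix.mul_assoc]
    rw [hmat, htrace_diag, Complex.re_sum]
    refine Finset.sum_congr rfl fun i _ => ?_
    rw [hpdef i, ← Complex.ofReal_mul, Complex.ofReal_re]
  -- the permuted trace value
  have perm_trace : ∀ ρ : Matrix (Fin d) (Fin d) ℂ, (∀ i, (Qᴴ * ρ * Q) i i = (p i : ℂ)) →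
      (trace (H * U₀ * ρ * U₀ᴴ)).re = ∑ i, ε i * p (σ i) := by
    intro ρ hρ
    have hmat : H * U₀ * ρ * U₀ᴴ = Q * (Dε * (P * (Qᴴ * ρ * Q) * Pᴴ)) * Qᴴ := by
      rw [hH, hU₀]
      simp only [Matrix.conjTranspose_mul, Matrix.conjTranspose_conjTranspose]
      simp only [Matrix.mul_assoc, hQc]
    rw [hmat, trace_conj hQ1, htrace_diag, Complex.re_sum]
    refine Finset.sum_congr rfl fun i _ => ?_
    rw [pmat_conj_diag σ (Qᴴ * ρ * Q) i, hρ (σ i), ← Complex.ofReal_mul, Complex.ofReal_re]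
  have hDωdiag : ∀ i, (Qᴴ * Dω * Q) i i = (p i : ℂ) := by
    intro i
    have : Qᴴ * Dω * Q = Dp := by
      rw [hDω]
      calc Qᴴ * (Q * Dp * Qᴴ) * Q = Qᴴ * (Q * (Dp * (Qᴴ * Q))) := by
            simp only [Matrix.mul_assoc]
        _ = Dp := by rw [hQ1, Matrix.mul_one, hQc]
    rw [this, hDp, Matrix.diagonal_apply_eq]
  -- lower bound for dephased traces over all unitaries
  have hlow : ∀ U ∈ Matrix.unitaryGroup (Fin d) ℂ,
      (∑ i, ε i * p (σ i)) ≤ (trace (H * U * Dω * Uᴴ)).re := by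
    intro U hU
    set V : Matrix (Fin d) (Fin d) ℂ := Qᴴ * U * Q with hV
    have hVmem : V ∈ Matrix.unitaryGroup (Fin d) ℂ := by
      rw [hV]
      exact mul_mem (mul_mem (Unitary.star_mem hQ) hU) hQ
    have hV2 : V * Vᴴ = 1 := by
      have := (Matrix.mem_unitaryGroup_iff).1 hVmem
      rwa [Matrix.star_eq_conjTranspose] at this
    have hV1 : Vᴴ * V = 1 := by
      have := (Matrix.mem_unitaryGroup_iff').1 hVmem
      rwa [Matrix.star_eq_conjTranspose] at this
    rw [hred U, trace_conj hQ1, trace_form]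
    have hmain := ds_bound_fin ε (p ∘ σ) (fun i j => Complex.normSq (V i (σ j))) hε hσ
      (fun i j => Complex.normSq_nonneg _)
      (fun i => by
        rw [Fintype.sum_equiv σ _ (fun j => Complex.normSq (V i j)) (fun j => rfl)]
        exact row_sum_normSq hV2 i)
      (fun j => col_sum_normSq hV1 (σ j))
    calc ∑ i, ε i * p (σ i) = ∑ i, ε i * (p ∘ σ) i := rfl
      _ ≤ ∑ i, ∑ j, ε i * (Complex.normSq (V i (σ j)) * (p ∘ σ) j) := hmain
      _ = ∑ i, ∑ j, ε i * (Complex.normSq (V i j) * p j) := by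
          refine Finset.sum_congr rfl fun i _ => ?_
          exact Equiv.sum_comp σ (fun j => ε i * (Complex.normSq (V i j) * p j))
  -- the value is attained at U₀, for both ω and Dω
  have hval_Dω : (trace (H * U₀ * Dω * U₀ᴴ)).re = ∑ i, ε i * p (σ i) := perm_trace Dω hDωdiag
  have hval_ω : (trace (H * U₀ * ω * U₀ᴴ)).re = ∑ i, ε i * p (σ i) := perm_trace ω hpdef
  -- rewrite target sums
  have hsum1 : (∑ i, p i * ε i) = ∑ i, ε i * p i := by
    refine Finset.sum_congr rfl fun i _ => mul_comm _ _
  have hsum2 : (∑ i, p (σ i) * ε i) = ∑ i, ε i * p (σ i) := by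
    refine Finset.sum_congr rfl fun i _ => mul_comm _ _
  -- part 1
  have part1 : sSup {v : ℝ | ∃ U ∈ Matrix.unitaryGroup (Fin d) ℂ,
        v = (Matrix.trace (H * Dω)).re - (Matrix.trace (H * U * Dω * Uᴴ)).re}
      = (∑ i, p i * ε i) - ∑ i, p (σ i) * ε i := by
    apply IsGreatest.csSup_eq
    constructor
    · refine ⟨U₀, hU₀mem, ?_⟩
      rw [htrHDω, hval_Dω, hsum1, hsum2]
    · rintro v ⟨U, hU, rfl⟩
      rw [htrHDω, hsum1, hsum2]
      have := hlow U hU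
      linarith
  refine ⟨part1, ?_⟩
  rw [part1]
  -- part 2: the second set contains the same value and is bounded above
  have hε0 : ∀ i : Fin d, ε ⟨0, hd⟩ ≤ ε i := fun i => hε (by simp [Fin.le_def])
  have hbdd2 : ∀ U ∈ Matrix.unitaryGroup (Fin d) ℂ,
      ε ⟨0, hd⟩ ≤ (trace (H * U * ω * Uᴴ)).re := by
    intro U hU
    set W : Matrix (Fin d) (Fin d) ℂ := Qᴴ * U with hW
    have hU1 : Uᴴ * U = 1 := by
      have := (Matrix.mem_unitaryGroup_iff').1 hU
      rwa [Matrix.star_eq_conjTranspose] at this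
    have hmat : H * U * ω * Uᴴ = Q * (Dε * (W * ω * Wᴴ)) * Qᴴ := by
      rw [hH, hW]
      simp only [Matrix.conjTranspose_mul, Matrix.conjTranspose_conjTranspose]
      simp only [Matrix.mul_assoc, hQ2, Matrix.mul_one]
    have hdiag_nonneg : ∀ i, 0 ≤ ((W * ω * Wᴴ) i i).re := by
      intro i
      have hx := hωpos.dotProduct_mulVec_nonneg (fun j => star (W i j))
      have heq : (W * ω * Wᴴ) i i
          = star (fun j => star (W i j)) ⬝ᵥ ω *ᵥ (fun j => star (W i j)) := by
        simp only [Matrix.mul_apply, Matrix.conjTranspose_apply, dotProduct,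
          Matrix.mulVec, Pi.star_apply, star_star]
        simp only [Finset.sum_mul, Finset.mul_sum]
        rw [Finset.sum_comm]
        exact Finset.sum_congr rfl fun k _ => Finset.sum_congr rfl fun j _ => by ring
      rw [heq]
      exact (Complex.le_def.1 hx).1
    have hdiag_sum : ∑ i, ((W * ω * Wᴴ) i i).re = 1 := by
      have htr : trace (W * ω * Wᴴ) = 1 := by
        rw [Matrix.trace_mul_comm, ← Matrix.mul_assoc]
        have : Wᴴ * W = 1 := by
          rw [hW]
          simp only [Matrix.conjTranspose_mul, Matrix.conjTranspose_conjTranspose]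
          calc Uᴴ * Q * (Qᴴ * U) = Uᴴ * (Q * (Qᴴ * U)) := by simp only [Matrix.mul_assoc]
            _ = 1 := by rw [hQc', hU1]
        rw [this, Matrix.one_mul, hωtr]
      have := congrArg Complex.re htr
      rw [Matrix.trace] at this
      simpa [Complex.re_sum] using this
    have hval : (trace (H * U * ω * Uᴴ)).re = ∑ i, ε i * ((W * ω * Wᴴ) i i).re := by
      rw [hmat, trace_conj hQ1, htrace_diag, Complex.re_sum]
      refine Finset.sum_congr rfl fun i _ => ?_
      rw [Complex.re_ofReal_mul]
    rw [hval]
    calc ε ⟨0, hd⟩ = ∑ i, ε ⟨0, hd⟩ * ((W * ω * Wᴴ) i i).re := by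
          rw [← Finset.mul_sum, hdiag_sum, mul_one]
      _ ≤ ∑ i, ε i * ((W * ω * Wᴴ) i i).re := by
          refine Finset.sum_le_sum fun i _ => ?_
          exact mul_le_mul_of_nonneg_right (hε0 i) (hdiag_nonneg i)
  -- membership of the value in the second set
  have hmem2 : ((∑ i, p i * ε i) - ∑ i, p (σ i) * ε i)
      ∈ {v : ℝ | ∃ U ∈ Matrix.unitaryGroup (Fin d) ℂ,
          v = (Matrix.trace (H * ω)).re - (Matrix.trace (H * U * ω * Uᴴ)).re} := by
    refine ⟨U₀, hU₀mem, ?_⟩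
    rw [htrHω, hval_ω, hsum1, hsum2]
  have hbdd2' : BddAbove {v : ℝ | ∃ U ∈ Matrix.unitaryGroup (Fin d) ℂ,
      v = (Matrix.trace (H * ω)).re - (Matrix.trace (H * U * ω * Uᴴ)).re} := by
    refine ⟨(∑ i, ε i * p i) - ε ⟨0, hd⟩, ?_⟩
    rintro v ⟨U, hU, rfl⟩
    rw [htrHω]
    have := hbdd2 U hU
    linarith
  exact le_csSup hbdd2' hmem2
end

section
/- For a qubit with diagonal Hamiltonian H = diag(ε₀, ε₁), ε₀ ≤ ε₁, and Bloch constraints x* = tr(σ_x ω), z* = tr(σ_z ω), the minimum ergotropy over all compatible states is attained at ρ*_{x*,z*} = ½(I + x*σ_x + z*σ_z), and this minimum strictly exceeds the incoherent ergotropy E(diag((1+z*)/2,(1−z*)/2), H) if and only if x* ≠ 0 and ε₀ < ε₁. -/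
open Matrix BigOperators
open scoped ComplexOrder

noncomputable def σx : Matrix (Fin 2) (Fin 2) ℂ := !![0, 1; 1, 0]
noncomputable def σy : Matrix (Fin 2) (Fin 2) ℂ := !![0, -Complex.I; Complex.I, 0]
noncomputable def σz : Matrix (Fin 2) (Fin 2) ℂ := !![1, 0; 0, -1]

/-- The ergotropy `max_U [tr(Hρ) − tr(H U ρ Uᴴ)]` of a qubit state. -/
noncomputable def ergo (H ρ : Matrix (Fin 2) (Fin 2) ℂ) : ℝ :=
  sSup {v : ℝ | ∃ U ∈ Matrix.unitaryGroup (Fin 2) ℂ,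
    v = (Matrix.trace (H * ρ)).re - (Matrix.trace (H * U * ρ * Uᴴ)).re}

namespace Stmt13Aux

/-- The set whose supremum is the ergotropy. -/
def S (H ρ : Matrix (Fin 2) (Fin 2) ℂ) : Set ℝ :=
  {v : ℝ | ∃ U ∈ Matrix.unitaryGroup (Fin 2) ℂ,
    v = (Matrix.trace (H * ρ)).re - (Matrix.trace (H * U * ρ * Uᴴ)).re}

lemma ergo_eq_sSup (H ρ : Matrix (Fin 2) (Fin 2) ℂ) : ergo H ρ = sSup (S H ρ) := rfl

lemma zero_mem_S (H ρ : Matrix (Fin 2) (Fin 2) ℂ) : (0:ℝ) ∈ S H ρ :=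
  ⟨1, one_mem _, by simp⟩

lemma trace_diag_mul (ε₀ ε₁ : ℝ) (ρ : Matrix (Fin 2) (Fin 2) ℂ) :
    Matrix.trace (Matrix.diagonal ![(ε₀:ℂ), ε₁] * ρ) = ε₀ * ρ 0 0 + ε₁ * ρ 1 1 := by
  simp [Matrix.trace_fin_two, Matrix.mul_apply, Fin.sum_univ_two, Matrix.diagonal]

lemma trace_sx (ρ : Matrix (Fin 2) (Fin 2) ℂ) :
    Matrix.trace (σx * ρ) = ρ 1 0 + ρ 0 1 := by
  rw [Matrix.trace_fin_two, Matrix.mul_apply, Matrix.mul_apply, Fin.sum_univ_two,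
    Fin.sum_univ_two]
  simp [σx]

lemma trace_sz (ρ : Matrix (Fin 2) (Fin 2) ℂ) :
    Matrix.trace (σz * ρ) = ρ 0 0 - ρ 1 1 := by
  rw [Matrix.trace_fin_two, Matrix.mul_apply, Matrix.mul_apply, Fin.sum_univ_two,
    Fin.sum_univ_two]
  simp [σz]; ring

lemma trace_H_re (ε₀ ε₁ zs : ℝ) (ρ : Matrix (Fin 2) (Fin 2) ℂ)
    (e1 : ρ 0 0 + ρ 1 1 = 1) (e3 : ρ 0 0 - ρ 1 1 = (zs:ℂ)) :
    (Matrix.trace (Matrix.diagonal ![(ε₀:ℂ), ε₁] * ρ)).re = (ε₀+ε₁)/2 + (ε₀-ε₁)/2*zs := by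
  have h : Matrix.trace (Matrix.diagonal ![(ε₀:ℂ), ε₁] * ρ)
      = (((ε₀+ε₁)/2 + (ε₀-ε₁)/2*zs : ℝ) : ℂ) := by
    rw [trace_diag_mul]
    push_cast
    linear_combination (((ε₀:ℂ)+ε₁)/2) * e1 + (((ε₀:ℂ)-ε₁)/2) * e3
  rw [h, Complex.ofReal_re]

/-- Universal lower bound for the final energy after a unitary. -/
lemma S_le (ε₀ ε₁ : ℝ) (hε : ε₀ ≤ ε₁) (ρ : Matrix (Fin 2) (Fin 2) ℂ)
    (hPSD : ρ.PosSemidef) (htr : ρ.trace = 1)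
    (U : Matrix (Fin 2) (Fin 2) ℂ) (hU : U ∈ Matrix.unitaryGroup (Fin 2) ℂ) :
    (Matrix.trace (Matrix.diagonal ![(ε₀:ℂ), ε₁] * U * ρ * Uᴴ)).re
      ≥ (ε₀+ε₁)/2 - (ε₁-ε₀)/2 * Real.sqrt (2*(Matrix.trace (ρ*ρ)).re - 1) := by
  have hU1 : Uᴴ * U = 1 := by
    rw [← Matrix.star_eq_conjTranspose]
    exact (Matrix.mem_unitaryGroup_iff'.mp hU)
  set σ := U * ρ * Uᴴ with hσdef
  have hσPSD : σ.PosSemidef := hPSD.mul_mul_conjTranspose_same U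
  have hσtr : σ.trace = 1 := by
    rw [hσdef, Matrix.trace_mul_cycle, hU1, Matrix.one_mul, htr]
  have hσ2 : (σ * σ).trace = (ρ * ρ).trace := by
    have h1 : σ * σ = U * (ρ * ρ) * Uᴴ := by
      simp only [hσdef, Matrix.mul_assoc]
      rw [show Uᴴ * (U * (ρ * Uᴴ)) = ρ * Uᴴ by rw [← Matrix.mul_assoc, hU1, Matrix.one_mul]]
    rw [h1, Matrix.trace_mul_cycle, hU1, Matrix.one_mul]
  have hHσ : Matrix.diagonal ![(ε₀:ℂ), ε₁] * U * ρ * Uᴴ = Matrix.diagonal ![(ε₀:ℂ), ε₁] * σ := by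
    simp only [hσdef, Matrix.mul_assoc]
  have h00 : 0 ≤ σ 0 0 := hσPSD.diag_nonneg
  have h11 : 0 ≤ σ 1 1 := hσPSD.diag_nonneg
  have h10 : σ 1 0 = (starRingEnd ℂ) (σ 0 1) := by
    conv_lhs => rw [← hσPSD.1]
    simp [Matrix.conjTranspose_apply]
  set p := (σ 0 0).re with hp
  set q := (σ 1 1).re with hq
  have hp0 : 0 ≤ p := (Complex.nonneg_iff.mp h00).1
  have hq0 : 0 ≤ q := (Complex.nonneg_iff.mp h11).1
  have h00' : σ 0 0 = (p:ℂ) :=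
    Complex.ext (by simp [hp]) (by simpa using ((Complex.nonneg_iff.mp h00).2).symm)
  have h11' : σ 1 1 = (q:ℂ) :=
    Complex.ext (by simp [hq]) (by simpa using ((Complex.nonneg_iff.mp h11).2).symm)
  have hpq : p + q = 1 := by
    have := hσtr
    rw [Matrix.trace_fin_two, h00', h11'] at this
    exact_mod_cast this
  have hpur : (Matrix.trace (σ * σ)).re = p^2 + q^2 + 2 * Complex.normSq (σ 0 1) := by
    rw [Matrix.trace_fin_two, Matrix.mul_apply, Matrix.mul_apply, Fin.sum_univ_two,
      Fin.sum_univ_two, h00', h11', h10, ← Complex.normSq_eq_conj_mul_self]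
    simp [Complex.normSq_apply]
    ring
  have hEσ : (Matrix.trace (Matrix.diagonal ![(ε₀:ℂ), ε₁] * σ)).re = ε₀ * p + ε₁ * q := by
    have h : Matrix.trace (Matrix.diagonal ![(ε₀:ℂ), ε₁] * σ) = ε₀ * σ 0 0 + ε₁ * σ 1 1 :=
      trace_diag_mul ε₀ ε₁ σ
    rw [h, h00', h11']
    simp
  have hkey : p - q ≤ Real.sqrt (2*(Matrix.trace (ρ*ρ)).re - 1) := by
    have h1 : (p - q)^2 ≤ 2*(Matrix.trace (ρ*ρ)).re - 1 := by
      rw [← hσ2, hpur]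
      nlinarith [Complex.normSq_nonneg (σ 0 1), hpq]
    calc p - q ≤ |p - q| := le_abs_self _
    _ = Real.sqrt ((p-q)^2) := (Real.sqrt_sq_eq_abs _).symm
    _ ≤ _ := Real.sqrt_le_sqrt h1
  rw [hHσ, hEσ]
  have e : ε₀*p+ε₁*q = (ε₀+ε₁)/2 + (ε₁-ε₀)/2*(q-p) := by
    linear_combination ((ε₀+ε₁)/2) * hpq
  rw [e]
  have h2 : 0 ≤ (ε₁-ε₀)/2 * (Real.sqrt (2*(Matrix.trace (ρ*ρ)).re - 1) - (p - q)) :=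
    mul_nonneg (by linarith) (by linarith)
  nlinarith [h2]

lemma bddAbove_S (ε₀ ε₁ : ℝ) (hε : ε₀ ≤ ε₁) (ρ : Matrix (Fin 2) (Fin 2) ℂ)
    (hPSD : ρ.PosSemidef) (htr : ρ.trace = 1) :
    BddAbove (S (Matrix.diagonal ![(ε₀:ℂ), ε₁]) ρ) := by
  refine ⟨(Matrix.trace (Matrix.diagonal ![(ε₀:ℂ), ε₁] * ρ)).re - (ε₀+ε₁)/2
      + (ε₁-ε₀)/2 * Real.sqrt (2*(Matrix.trace (ρ*ρ)).re - 1), ?_⟩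
  rintro v ⟨U, hU, rfl⟩
  have := S_le ε₀ ε₁ hε ρ hPSD htr U hU
  linarith

lemma lt_aux (E A B z : ℝ) (h : 0 < E * (B - A)) : E * (A - z)/2 < E * (B - z)/2 := by
  nlinarith [h]

lemma exists_cs (a b : ℝ) (hab : a^2 + b^2 = 1) :
    ∃ c s : ℝ, c^2 + s^2 = 1 ∧ c^2 - s^2 = a ∧ 2*c*s = b := by
  by_cases h : a = -1
  · have hb : b = 0 := by nlinarith
    exact ⟨0, 1, by norm_num, by norm_num [h], by norm_num [hb]⟩
  · have ha2 : -1 ≤ a := by nlinarith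
    have hpos : 0 < 1 + a := by
      rcases lt_or_eq_of_le ha2 with h' | h'
      · linarith
      · exact absurd h'.symm h
    set c := Real.sqrt ((1+a)/2) with hc
    have hc2 : c^2 = (1+a)/2 := Real.sq_sqrt (by linarith)
    have hcpos : 0 < c := Real.sqrt_pos.mpr (by linarith)
    refine ⟨c, b / (2*c), ?_, ?_, ?_⟩
    · field_simp
      nlinarith [hc2]
    · field_simp
      nlinarith [hc2]
    · field_simp

lemma rot_unitary (c s : ℝ) (hcs : c^2 + s^2 = 1) :
    (!![(c:ℂ), -s; s, c]) ∈ Matrix.unitaryGroup (Fin 2) ℂ := by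
  have hc : ((c:ℂ)^2 + (s:ℂ)^2 = 1) := by exact_mod_cast hcs
  rw [Matrix.mem_unitaryGroup_iff]
  ext i j
  fin_cases i <;> fin_cases j <;>
    · rw [Matrix.mul_apply, Fin.sum_univ_two]
      simp [Matrix.star_apply, Matrix.one_apply, Complex.conj_ofReal]
      first
      | linear_combination hc
      | linear_combination -hc
      | ring

lemma rot_trace (ε₀ ε₁ c s xs zs : ℝ) (hcs : c^2 + s^2 = 1) (ω : Matrix (Fin 2) (Fin 2) ℂ)
    (e1 : ω 0 0 + ω 1 1 = 1) (e2 : ω 1 0 + ω 0 1 = (xs:ℂ)) (e3 : ω 0 0 - ω 1 1 = (zs:ℂ)) :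
    Matrix.trace (Matrix.diagonal ![(ε₀:ℂ), ε₁] * !![(c:ℂ), -s; s, c] * ω * (!![(c:ℂ), -s; s, c])ᴴ)
    = (((ε₀+ε₁)/2 + (ε₀-ε₁)/2 * ((c^2-s^2)*zs - 2*c*s*xs) : ℝ) : ℂ) := by
  rw [Matrix.trace_fin_two]
  simp only [Matrix.mul_apply, Fin.sum_univ_two, Matrix.conjTranspose_apply,
    Matrix.diagonal, Matrix.of_apply]
  push_cast
  simp [Complex.conj_ofReal, Matrix.one_apply]
  linear_combination (((ε₀:ℂ)+ε₁)/2) * e1 + (((ε₀:ℂ)-ε₁)/2 * ((c:ℂ)^2-(s:ℂ)^2)) * e3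
    - (((ε₀:ℂ)-ε₁)/2 * (2*(c:ℂ)*(s:ℂ))) * e2
    + (((ε₀:ℂ)+ε₁)/2 * (ω 0 0 + ω 1 1)) * (by exact_mod_cast hcs : (c:ℂ)^2 + (s:ℂ)^2 = 1)

/-- Attainability: the ergotropy is at least the value obtained by rotating the
Bloch vector component in the x–z plane to the north pole. -/
lemma ergo_ge (ε₀ ε₁ : ℝ) (hε : ε₀ ≤ ε₁) (ω : Matrix (Fin 2) (Fin 2) ℂ)
    (hPSD : ω.PosSemidef) (htr : ω.trace = 1) (xs zs : ℝ)
    (hx : Matrix.trace (σx * ω) = (xs:ℂ)) (hz : Matrix.trace (σz * ω) = (zs:ℂ)) :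
    (ε₁-ε₀) * (Real.sqrt (xs^2+zs^2) - zs) / 2 ≤ ergo (Matrix.diagonal ![(ε₀:ℂ), ε₁]) ω := by
  have e1 : ω 0 0 + ω 1 1 = 1 := by rw [Matrix.trace_fin_two] at htr; exact htr
  have e2 : ω 1 0 + ω 0 1 = (xs:ℂ) := by rw [trace_sx] at hx; exact hx
  have e3 : ω 0 0 - ω 1 1 = (zs:ℂ) := by rw [trace_sz] at hz; exact hz
  have hbdd := bddAbove_S ε₀ ε₁ hε ω hPSD htr
  have htrHω : (Matrix.trace (Matrix.diagonal ![(ε₀:ℂ), ε₁] * ω)).re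
      = (ε₀+ε₁)/2 + (ε₀-ε₁)/2*zs := trace_H_re ε₀ ε₁ zs ω e1 e3
  rw [ergo_eq_sSup]
  by_cases hR : xs^2 + zs^2 = 0
  · have hx0 : xs = 0 := by nlinarith [sq_nonneg xs, sq_nonneg zs]
    have hz0 : zs = 0 := by nlinarith [sq_nonneg xs, sq_nonneg zs]
    have : (ε₁-ε₀) * (Real.sqrt (xs^2+zs^2) - zs) / 2 = 0 := by
      rw [hx0, hz0]; simp
    rw [this]
    exact le_csSup hbdd (zero_mem_S _ _)
  · have hRpos : 0 < xs^2 + zs^2 := lt_of_le_of_ne (by positivity) (Ne.symm hR)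
    set R := Real.sqrt (xs^2 + zs^2) with hRdef
    have hRgt : 0 < R := Real.sqrt_pos.mpr hRpos
    have hR2 : R^2 = xs^2 + zs^2 := Real.sq_sqrt (le_of_lt hRpos)
    obtain ⟨c, s, hcs, hA, hB⟩ := exists_cs (zs/R) (-xs/R)
      (by field_simp; nlinarith [hR2])
    have hval : (c^2-s^2)*zs - 2*c*s*xs = R := by
      rw [hA, hB]
      field_simp
      nlinarith [hR2]
    have hrot := rot_trace ε₀ ε₁ c s xs zs hcs ω e1 e2 e3
    rw [hval] at hrot
    apply le_csSup hbdd
    refine ⟨!![(c:ℂ), -s; s, c], rot_unitary c s hcs, ?_⟩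
    rw [htrHω, hrot, Complex.ofReal_re]
    ring

/-- Exact value of the ergotropy for a state with real off-diagonal entries. -/
lemma ergo_eq (ε₀ ε₁ : ℝ) (hε : ε₀ ≤ ε₁) (ρ : Matrix (Fin 2) (Fin 2) ℂ)
    (hPSD : ρ.PosSemidef) (htr : ρ.trace = 1) (xs zs : ℝ)
    (hx : Matrix.trace (σx * ρ) = (xs:ℂ)) (hz : Matrix.trace (σz * ρ) = (zs:ℂ))
    (h2 : 2*(Matrix.trace (ρ*ρ)).re - 1 = xs^2 + zs^2) :
    ergo (Matrix.diagonal ![(ε₀:ℂ), ε₁]) ρ = (ε₁-ε₀) * (Real.sqrt (xs^2+zs^2) - zs) / 2 := by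
  have e1 : ρ 0 0 + ρ 1 1 = 1 := by rw [Matrix.trace_fin_two] at htr; exact htr
  have e3 : ρ 0 0 - ρ 1 1 = (zs:ℂ) := by rw [trace_sz] at hz; exact hz
  refine le_antisymm ?_ (ergo_ge ε₀ ε₁ hε ρ hPSD htr xs zs hx hz)
  rw [ergo_eq_sSup]
  apply csSup_le ⟨0, zero_mem_S _ _⟩
  rintro v ⟨U, hU, rfl⟩
  have hb := S_le ε₀ ε₁ hε ρ hPSD htr U hU
  rw [h2] at hb
  have htrH := trace_H_re ε₀ ε₁ zs ρ e1 e3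
  rw [htrH]
  linarith

end Stmt13Aux

open Stmt13Aux in
/-- For a qubit with diagonal Hamiltonian `H = diag(ε₀, ε₁)`, `ε₀ ≤ ε₁`, and Bloch constraints
`x* = tr(σ_x ω)`, `z* = tr(σ_z ω)`, the minimum ergotropy over all compatible states is attained
at `ρ*_{x*,z*} = ½(I + x*σ_x + z*σ_z)`, and it strictly exceeds the incoherent ergotropy (the
ergotropy of the dephased state `diag((1+z*)/2, (1−z*)/2)`) iff `x* ≠ 0` and `ε₀ < ε₁`. -/
theorem stmt13 (ε₀ ε₁ : ℝ) (hε : ε₀ ≤ ε₁) (xs zs : ℝ) (hball : xs ^ 2 + zs ^ 2 ≤ 1)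
    (H : Matrix (Fin 2) (Fin 2) ℂ) (hH : H = Matrix.diagonal ![(ε₀ : ℂ), (ε₁ : ℂ)])
    (Ω : Set (Matrix (Fin 2) (Fin 2) ℂ))
    (hΩ : Ω = {ω | ω.PosSemidef ∧ ω.trace = 1 ∧
        Matrix.trace (σx * ω) = (xs : ℂ) ∧ Matrix.trace (σz * ω) = (zs : ℂ)})
    (ρstar : Matrix (Fin 2) (Fin 2) ℂ)
    (hρstar : ρstar = (1 / 2 : ℂ) • (1 + (xs : ℂ) • σx + (zs : ℂ) • σz)) :
    IsLeast {w : ℝ | ∃ ω ∈ Ω, w = ergo H ω} (ergo H ρstar)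
    ∧ (ergo H (Matrix.diagonal ![(((1 + zs) / 2 : ℝ) : ℂ), (((1 - zs) / 2 : ℝ) : ℂ)])
          < ergo H ρstar
        ↔ xs ≠ 0 ∧ ε₀ < ε₁) := by
  subst hH hΩ hρstar
  -- explicit form of ρ*
  set ρstar := (1 / 2 : ℂ) • (1 + (xs : ℂ) • σx + (zs : ℂ) • σz) with hρdef
  have hmat : ρstar = !![(((1+zs)/2 : ℝ):ℂ), ((xs/2 : ℝ):ℂ); ((xs/2 : ℝ):ℂ), (((1-zs)/2 : ℝ):ℂ)] := by
    rw [hρdef]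
    ext i j
    fin_cases i <;> fin_cases j <;>
      · simp [σx, σz, Matrix.one_apply]
        push_cast
        ring
  have hzs1 : zs^2 ≤ 1 := by nlinarith [sq_nonneg xs]
  -- ρ* is a state
  have hPSDstar : ρstar.PosSemidef := by
    refine Matrix.PosSemidef.of_dotProduct_mulVec_nonneg ?_ ?_
    · rw [hmat]
      ext i j
      fin_cases i <;> fin_cases j <;>
        simp [Matrix.conjTranspose_apply, Complex.conj_ofReal]
    · intro v
      rw [hmat]
      have hexp : star v ⬝ᵥ (!![(((1+zs)/2 : ℝ):ℂ), ((xs/2 : ℝ):ℂ); ((xs/2 : ℝ):ℂ),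
          (((1-zs)/2 : ℝ):ℂ)] *ᵥ v)
          = ((((1+zs)/2 * Complex.normSq (v 0) + (1-zs)/2 * Complex.normSq (v 1)
            + xs * ((starRingEnd ℂ) (v 0) * v 1).re) : ℝ) : ℂ) := by
        simp only [dotProduct, Matrix.mulVec, Fin.sum_univ_two, Pi.star_apply,
          Matrix.cons_val', Matrix.cons_val_zero, Matrix.cons_val_one, Matrix.head_cons,
          Matrix.head_fin_const, Matrix.empty_val', Matrix.cons_val_fin_one]
        apply Complex.ext <;>
          simp [Complex.normSq_apply, Complex.mul_re, Complex.mul_im, Complex.add_re,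
            Complex.add_im] <;> ring
      rw [hexp]
      rw [Complex.zero_le_real]
      have ht2 : (((starRingEnd ℂ) (v 0) * v 1).re)^2 ≤ Complex.normSq (v 0) * Complex.normSq (v 1) := by
        have := Complex.normSq_nonneg ((starRingEnd ℂ) (v 0) * v 1)
        have h' : Complex.normSq ((starRingEnd ℂ) (v 0) * v 1)
            = Complex.normSq (v 0) * Complex.normSq (v 1) := by
          rw [Complex.normSq_mul, Complex.normSq_conj]
        nlinarith [sq_nonneg (((starRingEnd ℂ) (v 0) * v 1).im),
          Complex.normSq_apply ((starRingEnd ℂ) (v 0) * v 1)]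
      set A := Complex.normSq (v 0)
      set B := Complex.normSq (v 1)
      set t := ((starRingEnd ℂ) (v 0) * v 1).re
      have hA : 0 ≤ A := Complex.normSq_nonneg _
      have hB : 0 ≤ B := Complex.normSq_nonneg _
      nlinarith [sq_nonneg (xs*(A-B) - 2*zs*t), sq_nonneg (zs*(A-B) + 2*xs*t),
        sq_nonneg (A-B), sq_nonneg (A+B), mul_nonneg hA hB, ht2, hball]
  have htrstar : ρstar.trace = 1 := by
    rw [hmat, Matrix.trace_fin_two]
    norm_num
    try push_cast
    try ring
  have hxstar : Matrix.trace (σx * ρstar) = (xs:ℂ) := by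
    rw [trace_sx, hmat]
    norm_num
    try push_cast
    try ring
  have hzstar : Matrix.trace (σz * ρstar) = (zs:ℂ) := by
    rw [trace_sz, hmat]
    norm_num
    try push_cast
    try ring
  have h2star : 2*(Matrix.trace (ρstar*ρstar)).re - 1 = xs^2 + zs^2 := by
    have h : Matrix.trace (ρstar*ρstar)
        = ((((1+zs)/2)^2 + 2*(xs/2)^2 + ((1-zs)/2)^2 : ℝ) : ℂ) := by
      rw [hmat, Matrix.trace_fin_two, Matrix.mul_apply, Matrix.mul_apply, Fin.sum_univ_two,
        Fin.sum_univ_two]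
      norm_num
      try push_cast
      try ring
    rw [h, Complex.ofReal_re]
    ring
  have hergostar : ergo (Matrix.diagonal ![(ε₀:ℂ), ε₁]) ρstar
      = (ε₁-ε₀) * (Real.sqrt (xs^2+zs^2) - zs) / 2 :=
    ergo_eq ε₀ ε₁ hε ρstar hPSDstar htrstar xs zs hxstar hzstar h2star
  -- the dephased state
  set D : Matrix (Fin 2) (Fin 2) ℂ :=
    Matrix.diagonal ![(((1 + zs) / 2 : ℝ) : ℂ), (((1 - zs) / 2 : ℝ) : ℂ)] with hD
  have hPSDD : D.PosSemidef := by
    apply Matrix.PosSemidef.diagonal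
    intro i
    fin_cases i
    · simpa using Complex.zero_le_real.mpr (by nlinarith [hzs1] : (0:ℝ) ≤ (1+zs)/2)
    · simpa using Complex.zero_le_real.mpr (by nlinarith [hzs1] : (0:ℝ) ≤ (1-zs)/2)
    
  have htrD : D.trace = 1 := by
    rw [hD, Matrix.trace_fin_two]
    norm_num [Matrix.diagonal]
    try push_cast
    try ring
  have hxD : Matrix.trace (σx * D) = ((0:ℝ):ℂ) := by
    rw [trace_sx, hD]
    norm_num [Matrix.diagonal]
  have hzD : Matrix.trace (σz * D) = (zs:ℂ) := by
    rw [trace_sz, hD]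
    norm_num [Matrix.diagonal]
    try push_cast
    try ring
  have h2D : 2*(Matrix.trace (D*D)).re - 1 = 0^2 + zs^2 := by
    have h : Matrix.trace (D*D) = ((((1+zs)/2)^2 + ((1-zs)/2)^2 : ℝ) : ℂ) := by
      rw [hD, Matrix.trace_fin_two, Matrix.mul_apply, Matrix.mul_apply, Fin.sum_univ_two,
        Fin.sum_univ_two]
      norm_num [Matrix.diagonal]
      try push_cast
      try ring
    rw [h, Complex.ofReal_re]
    ring
  have hergoD : ergo (Matrix.diagonal ![(ε₀:ℂ), ε₁]) D
      = (ε₁-ε₀) * (Real.sqrt (0^2+zs^2) - zs) / 2 :=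
    ergo_eq ε₀ ε₁ hε D hPSDD htrD 0 zs hxD hzD h2D
  have hAB : Real.sqrt (0^2+zs^2) ≤ Real.sqrt (xs^2+zs^2) :=
    Real.sqrt_le_sqrt (by nlinarith [sq_nonneg xs])
  constructor
  · constructor
    · exact ⟨ρstar, ⟨hPSDstar, htrstar, hxstar, hzstar⟩, rfl⟩
    · rintro w ⟨ω, ⟨hωPSD, hωtr, hωx, hωz⟩, rfl⟩
      rw [hergostar]
      exact ergo_ge ε₀ ε₁ hε ω hωPSD hωtr xs zs hωx hωz
  · rw [hergoD, hergostar]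
    constructor
    · intro hlt
      have hε' : ε₀ < ε₁ := by
        rcases lt_or_eq_of_le hε with h' | h'
        · exact h'
        · exfalso; rw [← h'] at hlt; simp at hlt
      refine ⟨?_, hε'⟩
      intro hxs0
      rw [hxs0] at hlt
      simp at hlt
    · rintro ⟨hxs, hε'⟩
      have hABlt : Real.sqrt (0^2+zs^2) < Real.sqrt (xs^2+zs^2) := by
        apply Real.sqrt_lt_sqrt (by positivity)
        have : 0 < xs^2 := by positivity
        nlinarith
      exact lt_aux _ _ _ _ (mul_pos (sub_pos.mpr hε') (sub_pos.mpr hABlt))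
end
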